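/- arXiv:1203.4116 — 7 statements merged into one kernel-verified Lean document; each statement's English description precedes it below -/
import Mathlib

section
/- Stabilised inf-sup condition (Lemma 2.1): There exists a constant C > 0, depending only on β, M_b, C_F and C_π, such that every λ_h ∈ Λ_h satisfies ‖λ_h‖_L ≤ C · ( sup over v_h ∈ V_h with v_h ≠ 0 of b(λ_h, v_h)/‖v_h‖_V + ‖λ_h − π_L λ_h‖_{L_h} ). -/
/-!
Split `v = π_F v + (v - π_F v)`. Since `π_L λ_h ∈ L_h`, the Fortin property turns
`b(λ_h, v - π_F v)` into `b(λ_h - π_L λ_h, v - π_F v)`, which the stabilising projection controls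
by `‖λ_h - π_L λ_h‖_{L_h}`; the other part `b(λ_h, π_F v)` is controlled by the discrete supremum `S`
because `π_F v ∈ V_h`. Together with the continuous inf-sup condition this gives
`β ‖λ_h‖ ≤ C_F S + C_π (1 + C_F) ‖λ_h - π_L λ_h‖_{L_h}`.
-/

open Set

section DiscreteSupremum

variable {V : Type*} [NormedAddCommGroup V] [NormedSpace ℝ V]

lemma bddAbove_range_div_norm {f : V → ℝ} {M : ℝ} (hf : ∀ v, f v ≤ M * ‖v‖)
    (W : Submodule ℝ V) :
    BddAbove (range fun v : {v : V // v ∈ W ∧ v ≠ 0} => f v.1 / ‖v.1‖) := by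
  refine ⟨M, ?_⟩
  rintro _ ⟨v, rfl⟩
  exact (div_le_iff₀ (norm_pos_iff.mpr v.2.2)).mpr (hf v.1)

/-- Also covers the junk value `0` of `⨆` over an empty or unbounded family. -/
lemma iSup_div_norm_nonneg (f : V →ₗ[ℝ] ℝ) (W : Submodule ℝ V) :
    0 ≤ ⨆ v : {v : V // v ∈ W ∧ v ≠ 0}, f v.1 / ‖v.1‖ := by
  by_cases hbdd : BddAbove (range fun v : {v : V // v ∈ W ∧ v ≠ 0} => f v.1 / ‖v.1‖)
  · rcases isEmpty_or_nonempty {v : V // v ∈ W ∧ v ≠ 0} with _ | hne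
    · rw [Real.iSup_of_isEmpty]
    · obtain ⟨v⟩ := hne
      have hv := le_ciSup hbdd v
      have hneg := le_ciSup hbdd ⟨-v.1, W.neg_mem v.2.1, neg_ne_zero.mpr v.2.2⟩
      simp only [map_neg, norm_neg, neg_div] at hneg
      linarith
  · rw [Real.iSup_of_not_bddAbove hbdd]

lemma apply_le_iSup_div_norm_mul_norm {f : V →ₗ[ℝ] ℝ} {W : Submodule ℝ V}
    (hbdd : BddAbove (range fun v : {v : V // v ∈ W ∧ v ≠ 0} => f v.1 / ‖v.1‖))
    {w : V} (hw : w ∈ W) :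
    f w ≤ (⨆ v : {v : V // v ∈ W ∧ v ≠ 0}, f v.1 / ‖v.1‖) * ‖w‖ := by
  rcases eq_or_ne w 0 with rfl | hw0
  · simp
  · rw [← div_le_iff₀ (norm_pos_iff.mpr hw0)]
    exact le_ciSup (f := fun v : {v : V // v ∈ W ∧ v ≠ 0} => f v.1 / ‖v.1‖) hbdd ⟨w, hw, hw0⟩

end DiscreteSupremum

lemma iSup_div_norm_le {V : Type*} [NormedAddCommGroup V] {f : V → ℝ} {K : ℝ} (hK : 0 ≤ K)
    (hf : ∀ v, f v ≤ K * ‖v‖) : ⨆ v : {v : V // v ≠ 0}, f v.1 / ‖v.1‖ ≤ K :=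
  Real.iSup_le (fun v => (div_le_iff₀ (norm_pos_iff.mpr v.2)).mpr (hf v.1)) hK

lemma norm_sub_apply_le {V : Type*} [SeminormedAddCommGroup V] (T : V → V) {C : ℝ}
    (hT : ∀ v, ‖T v‖ ≤ C * ‖v‖) (v : V) : ‖v - T v‖ ≤ (1 + C) * ‖v‖ :=
  calc ‖v - T v‖ ≤ ‖v‖ + ‖T v‖ := norm_sub_le _ _
    _ ≤ (1 + C) * ‖v‖ := by linarith [hT v]

lemma apply_le_of_fortin {V L : Type*} [NormedAddCommGroup V] [NormedSpace ℝ V]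
    [AddCommGroup L] [Module ℝ L] (b : L →ₗ[ℝ] V →ₗ[ℝ] ℝ)
    {Vh : Submodule ℝ V} {Lh : Submodule ℝ L} {πF : V →ₗ[ℝ] V} {CF : ℝ}
    (hπF_mem : ∀ v : V, πF v ∈ Vh) (hπF_orth : ∀ μ ∈ Lh, ∀ v : V, b μ (v - πF v) = 0)
    (hπF_stab : ∀ v : V, ‖πF v‖ ≤ CF * ‖v‖)
    {lam μ : L} (hμ : μ ∈ Lh) {S K : ℝ} (hS0 : 0 ≤ S) (hK0 : 0 ≤ K)
    (hS : ∀ w ∈ Vh, b lam w ≤ S * ‖w‖) (hK : ∀ w, |b (lam - μ) w| ≤ K * ‖w‖) (v : V) :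
    b lam v ≤ (CF * S + (1 + CF) * K) * ‖v‖ := by
  have hsplit : b lam v = b lam (πF v) + b (lam - μ) (v - πF v) := by
    have horth := hπF_orth μ hμ v
    simp only [map_sub, LinearMap.sub_apply] at horth ⊢
    linarith
  have hconforming : b lam (πF v) ≤ CF * S * ‖v‖ :=
    calc b lam (πF v) ≤ S * ‖πF v‖ := hS _ (hπF_mem v)
      _ ≤ S * (CF * ‖v‖) := mul_le_mul_of_nonneg_left (hπF_stab v) hS0
      _ = CF * S * ‖v‖ := by ring
  have hstabilised : b (lam - μ) (v - πF v) ≤ (1 + CF) * K * ‖v‖ :=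
    calc b (lam - μ) (v - πF v) ≤ K * ‖v - πF v‖ := (le_abs_self _).trans (hK _)
      _ ≤ K * ((1 + CF) * ‖v‖) :=
          mul_le_mul_of_nonneg_left (norm_sub_apply_le πF hπF_stab v) hK0
      _ = (1 + CF) * K * ‖v‖ := by ring
  linarith

theorem stabilised_inf_sup_general
    {V L : Type*} [NormedAddCommGroup V] [NormedSpace ℝ V]
    [NormedAddCommGroup L] [NormedSpace ℝ L]
    -- bilinear form b and its continuity
    (b : L →ₗ[ℝ] V →ₗ[ℝ] ℝ)
    (Mb : ℝ)
    (hb_cont : ∀ (lam : L) (v : V), |b lam v| ≤ Mb * ‖lam‖ * ‖v‖)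
    -- continuous inf-sup condition
    (β : ℝ) (hβ : 0 < β)
    (h_infsup : ∀ lam : L, β * ‖lam‖ ≤ ⨆ v : {v : V // v ≠ 0}, b lam v.1 / ‖v.1‖)
    -- discrete subspaces
    (Vh : Submodule ℝ V) (Lh Λh : Submodule ℝ L)
    -- discrete norm on the subspace L_h + Λ_h
    (nLh : L → ℝ)
    (hnLh_nonneg : ∀ x ∈ Lh ⊔ Λh, 0 ≤ nLh x)
    -- Fortin operator
    (πF : V →ₗ[ℝ] V) (hπF_mem : ∀ v : V, πF v ∈ Vh)
    (hπF_orth : ∀ μ ∈ Lh, ∀ v : V, b μ (v - πF v) = 0)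
    (CF : ℝ) (hCF : 0 < CF)
    (hπF_stab : ∀ v : V, ‖πF v‖ ≤ CF * ‖v‖)
    -- stabilising projection π_L : Λ_h → L_h
    (πL : L →ₗ[ℝ] L) (hπL_mem : ∀ x ∈ Λh, πL x ∈ Lh)
    (Cπ : ℝ) (hCπ : 0 < Cπ)
    (hπL_cont : ∀ x ∈ Λh, ∀ v : V, |b (x - πL x) v| ≤ Cπ * nLh (x - πL x) * ‖v‖) :
    ∃ C > 0, ∀ lam ∈ Λh,
      ‖lam‖ ≤ C * ((⨆ v : {v : V // v ∈ Vh ∧ v ≠ 0}, b lam v.1 / ‖v.1‖)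
        + nLh (lam - πL lam)) := by
  refine ⟨(CF + Cπ * (1 + CF)) / β, by positivity, fun lam hlam => ?_⟩
  set S := ⨆ v : {v : V // v ∈ Vh ∧ v ≠ 0}, b lam v.1 / ‖v.1‖
  set n := nLh (lam - πL lam)
  have hS0 : 0 ≤ S := iSup_div_norm_nonneg (b lam) Vh
  have hn0 : 0 ≤ n := hnLh_nonneg _ <|
    Submodule.sub_mem _ (Submodule.mem_sup_right hlam) (Submodule.mem_sup_left (hπL_mem lam hlam))
  have hbdd := bddAbove_range_div_norm (fun v => (le_abs_self _).trans (hb_cont lam v)) Vh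
  have hkey : β * ‖lam‖ ≤ CF * S + (1 + CF) * (Cπ * n) :=
    (h_infsup lam).trans <| iSup_div_norm_le (by positivity) <|
      apply_le_of_fortin b hπF_mem hπF_orth hπF_stab (hπL_mem lam hlam) hS0 (by positivity)
        (fun w hw => apply_le_iSup_div_norm_mul_norm hbdd hw) (hπL_cont lam hlam)
  rw [div_mul_eq_mul_div, le_div_iff₀ hβ]
  nlinarith [mul_nonneg hCF.le hn0, mul_nonneg (mul_nonneg hCπ.le (by linarith : 0 ≤ 1 + CF)) hS0]

/-- **Stabilised inf-sup condition (Lemma 2.1).**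
There exists a constant `C > 0` (depending only on `β`, `M_b`, `C_F`, `C_π`) such that
every `λ_h ∈ Λ_h` satisfies
`‖λ_h‖_L ≤ C (sup_{v_h ∈ V_h, v_h ≠ 0} b(λ_h, v_h)/‖v_h‖_V + ‖λ_h − π_L λ_h‖_{L_h})`. -/
theorem stabilised_inf_sup
    {V L : Type*} [NormedAddCommGroup V] [NormedSpace ℝ V]
    [NormedAddCommGroup L] [NormedSpace ℝ L]
    -- bilinear form b and its continuity
    (b : L →ₗ[ℝ] V →ₗ[ℝ] ℝ)
    (Mb : ℝ) (hMb : 0 < Mb)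
    (hb_cont : ∀ (lam : L) (v : V), |b lam v| ≤ Mb * ‖lam‖ * ‖v‖)
    -- continuous inf-sup condition
    (β : ℝ) (hβ : 0 < β)
    (h_infsup : ∀ lam : L, β * ‖lam‖ ≤ ⨆ v : {v : V // v ≠ 0}, b lam v.1 / ‖v.1‖)
    -- discrete subspaces
    (Vh : Submodule ℝ V) (Lh Λh : Submodule ℝ L)
    -- discrete norm on the subspace L_h + Λ_h
    (nLh : L → ℝ)
    (hnLh_nonneg : ∀ x ∈ Lh ⊔ Λh, 0 ≤ nLh x)
    (hnLh_def : ∀ x ∈ Lh ⊔ Λh, nLh x = 0 → x = 0)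
    (hnLh_add : ∀ x ∈ Lh ⊔ Λh, ∀ y ∈ Lh ⊔ Λh, nLh (x + y) ≤ nLh x + nLh y)
    (hnLh_smul : ∀ (r : ℝ), ∀ x ∈ Lh ⊔ Λh, nLh (r • x) = |r| * nLh x)
    -- Fortin operator
    (πF : V →ₗ[ℝ] V) (hπF_mem : ∀ v : V, πF v ∈ Vh)
    (hπF_orth : ∀ μ ∈ Lh, ∀ v : V, b μ (v - πF v) = 0)
    (CF : ℝ) (hCF : 0 < CF)
    (hπF_stab : ∀ v : V, ‖πF v‖ ≤ CF * ‖v‖)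
    -- stabilising projection π_L : Λ_h → L_h
    (πL : L →ₗ[ℝ] L) (hπL_mem : ∀ x ∈ Λh, πL x ∈ Lh)
    (Cπ : ℝ) (hCπ : 0 < Cπ)
    (hπL_cont : ∀ x ∈ Λh, ∀ v : V, |b (x - πL x) v| ≤ Cπ * nLh (x - πL x) * ‖v‖) :
    ∃ C > 0, ∀ lam ∈ Λh,
      ‖lam‖ ≤ C * ((⨆ v : {v : V // v ∈ Vh ∧ v ≠ 0}, b lam v.1 / ‖v.1‖)
        + nLh (lam - πL lam)) :=
  stabilised_inf_sup_general b Mb hb_cont β hβ h_infsup Vh Lh Λh nLh hnLh_nonneg πF hπF_mem hπF_orth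
    CF hCF hπF_stab πL hπL_mem Cπ hCπ hπL_cont
end

section
/- Positivity of the stabilised system (Lemma 2.2): There exists a constant C > 0, depending only on α_ξ and c_s, such that for all u_h ∈ V_h and λ_h ∈ Λ_h, ‖u_h‖²_{V_h} + s(λ_h, λ_h) ≤ C · ( a(u_h, u_h) + b(λ_h, u_h) − b(λ_h − ξ_h(u_h), u_h) + s(λ_h, λ_h − ξ_h(u_h)) ). -/
/-!
Expanding the bilinear forms, the right-hand side is `C` times
`a(u,u) + b(ξ(u),u) + s(λ,λ) − s(λ,ξ(u))`. Since `s` is symmetric and positive semidefinite,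
`s(λ,ξ(u)) ≤ ½ s(λ,λ) + ½ s(ξ(u),ξ(u)) ≤ ½ s(λ,λ) + ½ c_s² ‖u‖²`, so coercivity bounds this
expression below by `(α_ξ − c_s²/2) ‖u‖² + ½ s(λ,λ)`, and both coefficients are positive by the
smallness condition.
-/

lemma LinearMap.two_mul_apply_le_add_of_symm {R M : Type*} [CommRing R] [LinearOrder R]
    [IsStrictOrderedRing R] [AddCommGroup M] [Module R M] (s : M →ₗ[R] M →ₗ[R] R)
    (hs_symm : ∀ x y, s x y = s y x) (hs_pos : ∀ x, 0 ≤ s x x) (x y : M) :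
    2 * s x y ≤ s x x + s y y := by
  have h := hs_pos (x - y)
  simp only [map_sub, LinearMap.sub_apply, hs_symm y x] at h
  linarith

lemma add_le_inv_min_mul_of_mul_add_mul_le {x y p q X : ℝ} (hx : 0 ≤ x) (hy : 0 ≤ y)
    (hp : 0 < p) (hq : 0 < q) (h : p * x + q * y ≤ X) :
    x + y ≤ (min p q)⁻¹ * X := by
  rw [le_inv_mul_iff₀ (lt_min hp hq)]
  calc min p q * (x + y) = min p q * x + min p q * y := mul_add _ _ _
    _ ≤ p * x + q * y := by gcongr <;> simp
    _ ≤ X := h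

theorem positivity_stabilised_system_general
    {Vh Λh : Type*} [NormedAddCommGroup Vh] [NormedSpace ℝ Vh]
    [AddCommGroup Λh] [Module ℝ Λh]
    -- bilinear forms
    (a : Vh →ₗ[ℝ] Vh →ₗ[ℝ] ℝ) (b : Λh →ₗ[ℝ] Vh →ₗ[ℝ] ℝ)
    -- stabilisation form: symmetric positive semidefinite
    (s : Λh →ₗ[ℝ] Λh →ₗ[ℝ] ℝ)
    (hs_symm : ∀ x y : Λh, s x y = s y x)
    (hs_pos : ∀ x : Λh, 0 ≤ s x x)
    -- coercivity assumption
    (ξh : Vh → Λh) (αξ cs : ℝ)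
    (hcoer : ∀ u : Vh, αξ * ‖u‖ ^ 2 ≤ a u u + b (ξh u) u)
    (hξs : ∀ u : Vh, Real.sqrt (s (ξh u) (ξh u)) ≤ cs * ‖u‖)
    (hsmall : cs ^ 2 < 2 * αξ) :
    ∃ C > 0, ∀ (u : Vh) (lam : Λh),
      ‖u‖ ^ 2 + s lam lam ≤
        C * (a u u + b lam u - b (lam - ξh u) u + s lam (lam - ξh u)) := by
  have hp : 0 < αξ - cs ^ 2 / 2 := by linarith
  refine ⟨(min (αξ - cs ^ 2 / 2) (1 / 2))⁻¹, by positivity, fun u lam => ?_⟩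
  have hξ_sq : s (ξh u) (ξh u) ≤ cs ^ 2 * ‖u‖ ^ 2 := by
    rw [← mul_pow]
    exact (Real.sqrt_le_iff.mp (hξs u)).2
  have hcross := s.two_mul_apply_le_add_of_symm hs_symm hs_pos lam (ξh u)
  refine add_le_inv_min_mul_of_mul_add_mul_le (sq_nonneg _) (hs_pos lam) hp one_half_pos ?_
  simp only [map_sub, LinearMap.sub_apply]
  linarith [hcoer u]

/-- **Positivity of the stabilised system (Lemma 2.2).**
There exists a constant `C > 0` (depending only on `α_ξ` and `c_s`) such that for all
`u_h ∈ V_h` and `λ_h ∈ Λ_h`,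
`‖u_h‖²_{V_h} + s(λ_h,λ_h) ≤ C (a(u_h,u_h) + b(λ_h,u_h) − b(λ_h − ξ_h(u_h),u_h)
  + s(λ_h, λ_h − ξ_h(u_h)))`. -/
theorem positivity_stabilised_system
    {Vh Λh : Type*} [NormedAddCommGroup Vh] [NormedSpace ℝ Vh]
    [AddCommGroup Λh] [Module ℝ Λh]
    -- bilinear forms
    (a : Vh →ₗ[ℝ] Vh →ₗ[ℝ] ℝ) (b : Λh →ₗ[ℝ] Vh →ₗ[ℝ] ℝ)
    -- stabilisation form: symmetric positive semidefinite
    (s : Λh →ₗ[ℝ] Λh →ₗ[ℝ] ℝ)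
    (hs_symm : ∀ x y : Λh, s x y = s y x)
    (hs_pos : ∀ x : Λh, 0 ≤ s x x)
    -- coercivity assumption
    (ξh : Vh → Λh) (αξ cs : ℝ) (hαξ : 0 < αξ) (hcs : 0 ≤ cs)
    (hcoer : ∀ u : Vh, αξ * ‖u‖ ^ 2 ≤ a u u + b (ξh u) u)
    (hξs : ∀ u : Vh, Real.sqrt (s (ξh u) (ξh u)) ≤ cs * ‖u‖)
    (hsmall : cs ^ 2 < 2 * αξ) :
    ∃ C > 0, ∀ (u : Vh) (lam : Λh),
      ‖u‖ ^ 2 + s lam lam ≤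
        C * (a u u + b lam u - b (lam - ξh u) u + s lam (lam - ξh u)) :=
  positivity_stabilised_system_general a b s hs_symm hs_pos ξh αξ cs hcoer hξs hsmall
end

section
/- Well-posedness of the stabilised discrete problem (Theorem 2.3, solvability): If (u_h, λ_h) ∈ V_h × Λ_h satisfies the homogeneous stabilised discrete problem a(u_h,v_h) + b(λ_h,v_h) + b(μ_h,u_h) − s(λ_h, μ_h) = 0 for all (v_h, μ_h) ∈ V_h × Λ_h, then u_h = 0 and λ_h = 0. Consequently, if V_h and Λ_h are finite-dimensional, then for every linear functional F : V → ℝ the stabilised discrete problem, find (u_h, λ_h) ∈ V_h × Λ_h with a(u_h,v_h) + b(λ_h,v_h) + b(μ_h,u_h) − s(λ_h, μ_h) = F(v_h) for all (v_h, μ_h) ∈ V_h × Λ_h, admits exactly one solution. -/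
/-!
Testing the homogeneous problem with `(u_h, ξ_h(u_h))` and with `(0, λ_h)` and combining the
coercivity assumption with Cauchy–Schwarz for `s` gives
`(2 α_ξ - c_s²) ‖u_h‖²_{V_h} + s(λ_h, λ_h) ≤ 0`, so `u_h = 0` and `s(λ_h, λ_h) = 0`.
Then `b(λ_h - π_L λ_h, ·)` vanishes, and the Fortin property transports the vanishing of
`b(λ_h, ·)` on `V_h` to all of `V`; the continuous inf-sup condition gives `λ_h = 0`.
In finite dimension the stabilised form is then an injective map into the dual space of
`V_h × Λ_h`, hence bijective.
-/

namespace LinearMap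

theorem existsUnique_apply_eq_of_injective {K X : Type*} [Field K] [AddCommGroup X] [Module K X]
    [FiniteDimensional K X] {B : X →ₗ[K] Module.Dual K X} (hB : Function.Injective B)
    (f : Module.Dual K X) : ∃! p, B p = f :=
  (B.linearEquivOfInjective hB Subspace.dual_finrank_eq.symm).bijective.existsUnique f

end LinearMap

section Algebraic

variable {R V L : Type*} [CommRing R] [AddCommGroup V] [Module R V] [AddCommGroup L] [Module R L]

def stabilisedForm (a : V →ₗ[R] V →ₗ[R] R) (b : L →ₗ[R] V →ₗ[R] R) (s : L →ₗ[R] L →ₗ[R] R)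
    (Vh : Submodule R V) (Λh : Submodule R L) : (Vh × Λh) →ₗ[R] (Vh × Λh) →ₗ[R] R :=
  let u : Vh × Λh →ₗ[R] V := Vh.subtype ∘ₗ LinearMap.fst R Vh Λh
  let l : Vh × Λh →ₗ[R] L := Λh.subtype ∘ₗ LinearMap.snd R Vh Λh
  a.compl₁₂ u u + b.compl₁₂ l u + (b.compl₁₂ l u).flip - s.compl₁₂ l l

@[simp]
theorem stabilisedForm_apply (a : V →ₗ[R] V →ₗ[R] R) (b : L →ₗ[R] V →ₗ[R] R)
    (s : L →ₗ[R] L →ₗ[R] R) (Vh : Submodule R V) (Λh : Submodule R L) (p q : Vh × Λh) :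
    stabilisedForm a b s Vh Λh p q =
      a p.1 q.1 + b p.2 q.1 + b q.2 p.1 - s p.2 q.2 :=
  rfl

theorem stabilisedForm_eq_comp_iff (a : V →ₗ[R] V →ₗ[R] R) (b : L →ₗ[R] V →ₗ[R] R)
    (s : L →ₗ[R] L →ₗ[R] R) (Vh : Submodule R V) (Λh : Submodule R L) (p : Vh × Λh)
    (f : V →ₗ[R] R) :
    stabilisedForm a b s Vh Λh p = f ∘ₗ Vh.subtype ∘ₗ LinearMap.fst R Vh Λh ↔
      ∀ v ∈ Vh, ∀ μ ∈ Λh,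
        a (p.1 : V) v + b (p.2 : L) v + b μ (p.1 : V) - s (p.2 : L) μ = f v := by
  simp [LinearMap.ext_iff]

theorem apply_eq_zero_of_fortin {b : L →ₗ[R] V →ₗ[R] R} {Vh : Submodule R V}
    {Lh : Submodule R L} {πF : V →ₗ[R] V} (hπF_mem : ∀ v, πF v ∈ Vh)
    (hπF_orth : ∀ μ ∈ Lh, ∀ v, b μ (v - πF v) = 0) {lam μ : L} (hμ : μ ∈ Lh)
    (hdiff : b (lam - μ) = 0) (hlam : ∀ v ∈ Vh, b lam v = 0) : b lam = 0 := by
  have hsame : ∀ v, b lam v = b μ v := fun v => by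
    simpa [sub_eq_zero] using LinearMap.congr_fun hdiff v
  ext v
  calc b lam v = b μ v := hsame v
    _ = b μ (πF v) := by simpa [sub_eq_zero] using hπF_orth μ hμ v
    _ = 0 := by rw [← hsame, hlam _ (hπF_mem v)]

end Algebraic

section Kernel

variable {V L : Type*} [AddCommGroup V] [Module ℝ V] [AddCommGroup L] [Module ℝ L]
  {a : V →ₗ[ℝ] V →ₗ[ℝ] ℝ} {b : L →ₗ[ℝ] V →ₗ[ℝ] ℝ} {s : L →ₗ[ℝ] L →ₗ[ℝ] ℝ}
  {Vh : Submodule ℝ V} {Λh : Submodule ℝ L}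

theorem apply_le_sqrt_mul_sqrt_of_symm (hs_symm : ∀ x ∈ Λh, ∀ y ∈ Λh, s x y = s y x)
    (hs_pos : ∀ x ∈ Λh, 0 ≤ s x x) {x y : L} (hx : x ∈ Λh) (hy : y ∈ Λh) :
    s x y ≤ √(s x x) * √(s y y) := by
  have hsq : s x y ^ 2 ≤ s x x * s y y :=
    LinearMap.BilinForm.apply_sq_le_of_symm (s.domRestrict₁₂ Λh Λh) (fun z => hs_pos z z.2)
      (LinearMap.isSymm_def.mpr fun z w => hs_symm z z.2 w w.2) ⟨x, hx⟩ ⟨y, hy⟩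
  rw [← Real.sqrt_mul (hs_pos x hx)]
  exact (le_abs_self _).trans (Real.abs_le_sqrt hsq)

theorem eq_zero_and_apply_self_eq_zero_of_stabilised_kernel {nVh : V → ℝ} {ξh : V → L}
    {αξ cs : ℝ} (hs_symm : ∀ x ∈ Λh, ∀ y ∈ Λh, s x y = s y x)
    (hs_pos : ∀ x ∈ Λh, 0 ≤ s x x) (hnVh_def : ∀ v ∈ Vh, nVh v = 0 → v = 0)
    (hξh_mem : ∀ u ∈ Vh, ξh u ∈ Λh) (hcoer : ∀ u ∈ Vh, αξ * nVh u ^ 2 ≤ a u u + b (ξh u) u)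
    (hξs : ∀ u ∈ Vh, √(s (ξh u) (ξh u)) ≤ cs * nVh u) (hsmall : cs ^ 2 < 2 * αξ)
    {uh : V} (huh : uh ∈ Vh) {lamh : L} (hlam : lamh ∈ Λh)
    (heq : ∀ v ∈ Vh, ∀ μ ∈ Λh, a uh v + b lamh v + b μ uh - s lamh μ = 0) :
    uh = 0 ∧ s lamh lamh = 0 := by
  have htest := heq uh huh (ξh uh) (hξh_mem uh huh)
  have hdiag : b lamh uh - s lamh lamh = 0 := by simpa using heq 0 Vh.zero_mem lamh hlam
  set n := nVh uh
  set t := √(s lamh lamh)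
  have ht : t ^ 2 = s lamh lamh := Real.sq_sqrt (hs_pos lamh hlam)
  have hcross : s lamh (ξh uh) ≤ t * (cs * n) :=
    (apply_le_sqrt_mul_sqrt_of_symm hs_symm hs_pos hlam (hξh_mem uh huh)).trans
      (mul_le_mul_of_nonneg_left (hξs uh huh) (Real.sqrt_nonneg _))
  -- `2 t (c_s n) ≤ t² + c_s² n²` absorbs the cross term
  have henergy : (2 * αξ - cs ^ 2) * n ^ 2 + t ^ 2 ≤ 0 := by
    nlinarith [hcoer uh huh, sq_nonneg (t - cs * n)]
  have hn : n ^ 2 = 0 := by nlinarith [sq_nonneg n, sq_nonneg t]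
  have ht0 : t ^ 2 = 0 := by nlinarith [sq_nonneg n, sq_nonneg t]
  exact ⟨hnVh_def uh huh (pow_eq_zero_iff two_ne_zero |>.mp hn), ht ▸ ht0⟩

theorem apply_sub_eq_zero_of_apply_self_eq_zero [Norm V] {nLh : L → ℝ} {πL : L →ₗ[ℝ] L}
    {Cπ Cs : ℝ} (hπL_cont : ∀ x ∈ Λh, ∀ v : V, |b (x - πL x) v| ≤ Cπ * nLh (x - πL x) * ‖v‖)
    (hs_stab : ∀ x ∈ Λh, nLh (x - πL x) ^ 2 ≤ Cs * s x x) {x : L} (hx : x ∈ Λh)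
    (hs0 : s x x = 0) : b (x - πL x) = 0 := by
  have hn : nLh (x - πL x) = 0 :=
    pow_eq_zero_iff two_ne_zero |>.mp <|
      le_antisymm (by simpa [hs0] using hs_stab x hx) (sq_nonneg _)
  ext v
  simpa [hn] using hπL_cont x hx v

end Kernel

theorem eq_zero_of_infsup {V L : Type*} [AddCommGroup V] [Norm V] [Module ℝ V]
    [NormedAddCommGroup L] [Module ℝ L] {b : L →ₗ[ℝ] V →ₗ[ℝ] ℝ} {β : ℝ} (hβ : 0 < β) {lam : L}
    (h_infsup : β * ‖lam‖ ≤ ⨆ v : {v : V // v ≠ 0}, b lam v.1 / ‖v.1‖) (hb : b lam = 0) :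
    lam = 0 := by
  have hsup : (⨆ v : {v : V // v ≠ 0}, b lam v.1 / ‖v.1‖) ≤ 0 :=
    Real.iSup_nonpos fun v => by simp [hb]
  exact norm_le_zero_iff.mp (nonpos_of_mul_nonpos_right (h_infsup.trans hsup) hβ)

theorem wellposedness_stabilised_discrete_problem_general
    {V L : Type*} [NormedAddCommGroup V] [NormedSpace ℝ V]
    [NormedAddCommGroup L] [NormedSpace ℝ L]
    -- bilinear forms; continuity of b
    (a : V →ₗ[ℝ] V →ₗ[ℝ] ℝ) (b : L →ₗ[ℝ] V →ₗ[ℝ] ℝ)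
    -- continuous inf-sup condition
    (β : ℝ) (hβ : 0 < β)
    (h_infsup : ∀ lam : L, β * ‖lam‖ ≤ ⨆ v : {v : V // v ≠ 0}, b lam v.1 / ‖v.1‖)
    -- discrete subspaces
    (Vh : Submodule ℝ V) (Lh Λh : Submodule ℝ L)
    -- discrete norm on V_h
    (nVh : V → ℝ)
    (hnVh_def : ∀ v ∈ Vh, nVh v = 0 → v = 0)
    -- discrete norm on L_h + Λ_h
    (nLh : L → ℝ)
    -- Fortin operator
    (πF : V →ₗ[ℝ] V) (hπF_mem : ∀ v : V, πF v ∈ Vh)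
    (hπF_orth : ∀ μ ∈ Lh, ∀ v : V, b μ (v - πF v) = 0)
    -- stabilising projection π_L : Λ_h → L_h
    (πL : L →ₗ[ℝ] L) (hπL_mem : ∀ x ∈ Λh, πL x ∈ Lh)
    (Cπ : ℝ)
    (hπL_cont : ∀ x ∈ Λh, ∀ v : V, |b (x - πL x) v| ≤ Cπ * nLh (x - πL x) * ‖v‖)
    -- stabilisation form
    (s : L →ₗ[ℝ] L →ₗ[ℝ] ℝ)
    (hs_symm : ∀ x ∈ Λh, ∀ y ∈ Λh, s x y = s y x)
    (hs_pos : ∀ x ∈ Λh, 0 ≤ s x x)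
    (Cs : ℝ)
    (hs_stab : ∀ x ∈ Λh, nLh (x - πL x) ^ 2 ≤ Cs * s x x)
    -- coercivity assumption
    (ξh : V → L) (hξh_mem : ∀ u ∈ Vh, ξh u ∈ Λh)
    (αξ cs : ℝ)
    (hcoer : ∀ u ∈ Vh, αξ * nVh u ^ 2 ≤ a u u + b (ξh u) u)
    (hξs : ∀ u ∈ Vh, Real.sqrt (s (ξh u) (ξh u)) ≤ cs * nVh u)
    (hsmall : cs ^ 2 < 2 * αξ) :
    -- homogeneous problem has only the trivial solution
    (∀ uh ∈ Vh, ∀ lamh ∈ Λh,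
      (∀ v ∈ Vh, ∀ μ ∈ Λh, a uh v + b lamh v + b μ uh - s lamh μ = 0) →
      uh = 0 ∧ lamh = 0) ∧
    -- in finite dimension: existence and uniqueness for every right-hand side
    (FiniteDimensional ℝ Vh → FiniteDimensional ℝ Λh →
      ∀ F : V →ₗ[ℝ] ℝ, ∃! p : Vh × Λh,
        ∀ v ∈ Vh, ∀ μ ∈ Λh,
          a (p.1 : V) v + b (p.2 : L) v + b μ (p.1 : V) - s (p.2 : L) μ = F v) := by
  have hkernel : ∀ uh ∈ Vh, ∀ lamh ∈ Λh,
      (∀ v ∈ Vh, ∀ μ ∈ Λh, a uh v + b lamh v + b μ uh - s lamh μ = 0) →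
      uh = 0 ∧ lamh = 0 := by
    intro uh huh lamh hlam heq
    obtain ⟨rfl, hs0⟩ := eq_zero_and_apply_self_eq_zero_of_stabilised_kernel hs_symm hs_pos
      hnVh_def hξh_mem hcoer hξs hsmall huh hlam heq
    have hbVh : ∀ v ∈ Vh, b lamh v = 0 := fun v hv => by simpa using heq v hv 0 Λh.zero_mem
    refine ⟨rfl, eq_zero_of_infsup hβ (h_infsup lamh) ?_⟩
    exact apply_eq_zero_of_fortin hπF_mem hπF_orth (hπL_mem lamh hlam)
      (apply_sub_eq_zero_of_apply_self_eq_zero hπL_cont hs_stab hlam hs0) hbVh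
  refine ⟨hkernel, fun _ _ F => ?_⟩
  have hinj : Function.Injective (stabilisedForm a b s Vh Λh) := by
    refine (injective_iff_map_eq_zero _).mpr fun p hp => ?_
    rw [← LinearMap.zero_comp (Vh.subtype ∘ₗ LinearMap.fst ℝ Vh Λh),
      stabilisedForm_eq_comp_iff] at hp
    obtain ⟨h1, h2⟩ := hkernel _ p.1.2 _ p.2.2 (by simpa using hp)
    exact Prod.ext (Subtype.ext h1) (Subtype.ext h2)
  simpa only [stabilisedForm_eq_comp_iff] using
    LinearMap.existsUnique_apply_eq_of_injective hinj (F ∘ₗ Vh.subtype ∘ₗ LinearMap.fst ℝ Vh Λh)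

/-- **Well-posedness of the stabilised discrete problem (Theorem 2.3, solvability).**
If `(u_h, λ_h) ∈ V_h × Λ_h` satisfies the homogeneous stabilised discrete problem then
`u_h = 0` and `λ_h = 0`; consequently, if `V_h` and `Λ_h` are finite-dimensional, for every
linear functional `F : V → ℝ` the stabilised discrete problem admits exactly one
solution. -/
theorem wellposedness_stabilised_discrete_problem
    {V L : Type*} [NormedAddCommGroup V] [NormedSpace ℝ V]
    [NormedAddCommGroup L] [NormedSpace ℝ L]
    -- bilinear forms; continuity of b
    (a : V →ₗ[ℝ] V →ₗ[ℝ] ℝ) (b : L →ₗ[ℝ] V →ₗ[ℝ] ℝ)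
    (Mb : ℝ) (hMb : 0 < Mb)
    (hb_cont : ∀ (lam : L) (v : V), |b lam v| ≤ Mb * ‖lam‖ * ‖v‖)
    -- continuous inf-sup condition
    (β : ℝ) (hβ : 0 < β)
    (h_infsup : ∀ lam : L, β * ‖lam‖ ≤ ⨆ v : {v : V // v ≠ 0}, b lam v.1 / ‖v.1‖)
    -- discrete subspaces
    (Vh : Submodule ℝ V) (Lh Λh : Submodule ℝ L)
    -- discrete norm on V_h
    (nVh : V → ℝ) (CV : ℝ) (hCV : 0 < CV)
    (hnVh_nonneg : ∀ v ∈ Vh, 0 ≤ nVh v)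
    (hnVh_def : ∀ v ∈ Vh, nVh v = 0 → v = 0)
    (hnVh_add : ∀ v ∈ Vh, ∀ w ∈ Vh, nVh (v + w) ≤ nVh v + nVh w)
    (hnVh_smul : ∀ (r : ℝ), ∀ v ∈ Vh, nVh (r • v) = |r| * nVh v)
    (hV_comp : ∀ v ∈ Vh, ‖v‖ ≤ CV * nVh v)
    -- discrete norm on L_h + Λ_h
    (nLh : L → ℝ)
    (hnLh_nonneg : ∀ x ∈ Lh ⊔ Λh, 0 ≤ nLh x)
    (hnLh_def : ∀ x ∈ Lh ⊔ Λh, nLh x = 0 → x = 0)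
    (hnLh_add : ∀ x ∈ Lh ⊔ Λh, ∀ y ∈ Lh ⊔ Λh, nLh (x + y) ≤ nLh x + nLh y)
    (hnLh_smul : ∀ (r : ℝ), ∀ x ∈ Lh ⊔ Λh, nLh (r • x) = |r| * nLh x)
    -- discrete continuities
    (ha_disc : ∀ u ∈ Vh, ∀ v ∈ Vh, |a u v| ≤ nVh u * nVh v)
    (hb_disc : ∀ lam ∈ Lh ⊔ Λh, ∀ v ∈ Vh, |b lam v| ≤ nLh lam * nVh v)
    -- Fortin operator
    (πF : V →ₗ[ℝ] V) (hπF_mem : ∀ v : V, πF v ∈ Vh)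
    (hπF_orth : ∀ μ ∈ Lh, ∀ v : V, b μ (v - πF v) = 0)
    (CF : ℝ) (hCF : 0 < CF)
    (hπF_stab : ∀ v : V, ‖πF v‖ ≤ CF * ‖v‖)
    -- stabilising projection π_L : Λ_h → L_h
    (πL : L →ₗ[ℝ] L) (hπL_mem : ∀ x ∈ Λh, πL x ∈ Lh)
    (Cπ : ℝ) (hCπ : 0 < Cπ)
    (hπL_cont : ∀ x ∈ Λh, ∀ v : V, |b (x - πL x) v| ≤ Cπ * nLh (x - πL x) * ‖v‖)
    -- stabilisation form
    (s : L →ₗ[ℝ] L →ₗ[ℝ] ℝ)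
    (hs_symm : ∀ x ∈ Λh, ∀ y ∈ Λh, s x y = s y x)
    (hs_pos : ∀ x ∈ Λh, 0 ≤ s x x)
    (Cs : ℝ) (hCs : 0 < Cs)
    (hs_stab : ∀ x ∈ Λh, nLh (x - πL x) ^ 2 ≤ Cs * s x x)
    -- coercivity assumption
    (ξh : V → L) (hξh_mem : ∀ u ∈ Vh, ξh u ∈ Λh)
    (αξ cs : ℝ) (hαξ : 0 < αξ) (hcs : 0 ≤ cs)
    (hcoer : ∀ u ∈ Vh, αξ * nVh u ^ 2 ≤ a u u + b (ξh u) u)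
    (hξs : ∀ u ∈ Vh, Real.sqrt (s (ξh u) (ξh u)) ≤ cs * nVh u)
    (hsmall : cs ^ 2 < 2 * αξ) :
    -- homogeneous problem has only the trivial solution
    (∀ uh ∈ Vh, ∀ lamh ∈ Λh,
      (∀ v ∈ Vh, ∀ μ ∈ Λh, a uh v + b lamh v + b μ uh - s lamh μ = 0) →
      uh = 0 ∧ lamh = 0) ∧
    -- in finite dimension: existence and uniqueness for every right-hand side
    (FiniteDimensional ℝ Vh → FiniteDimensional ℝ Λh →
      ∀ F : V →ₗ[ℝ] ℝ, ∃! p : Vh × Λh,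
        ∀ v ∈ Vh, ∀ μ ∈ Λh,
          a (p.1 : V) v + b (p.2 : L) v + b μ (p.1 : V) - s (p.2 : L) μ = F v) :=
  wellposedness_stabilised_discrete_problem_general a b β hβ h_infsup Vh Lh Λh nVh hnVh_def nLh πF
    hπF_mem hπF_orth πL hπL_mem Cπ hπL_cont s hs_symm hs_pos Cs hs_stab ξh hξh_mem αξ cs hcoer hξs
    hsmall
end

section
/- Intermediate primal estimate in the proof of Theorem 2.3 (equation (2.16)): Suppose (u, λ) ∈ V × L solves the continuous problem and (u_h, λ_h) ∈ V_h × Λ_h solves the stabilised discrete problem with the same right-hand side F. Then there exists a constant C > 0, depending only on the constants of the framework, such that for every ν_h ∈ Λ_h, setting η_h := u_h − π_F u and ζ_h := λ_h − ν_h, one has ‖η_h‖_{V_h} + s(ζ_h, ζ_h)^{1/2} ≤ C · ( ‖u − π_F u‖_V + ‖λ − ν_h‖_L + s(ν_h, ν_h)^{1/2} ). -/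
/-!
Subtracting the discrete from the continuous problem gives error equations for
`η = u_h - π_F u` and `ζ = λ_h - ν_h`. In the dual one the Fortin property lets `π_L μ` see `u`
and `π_F u` alike, so the interpolation error is only tested by `μ - π_L μ`, which the
stabilisation controls. Testing with `η`, `ζ` and `ξ_h η` and using coercivity gives
`α_ξ N² + S² ≤ c_s N S + K R (N + S)` with `N = ‖η‖_{V_h}`, `S = s(ζ, ζ)^{1/2}` and `R` the data
error; the coupling term is absorbed by Young's inequality exactly because `c_s² < 2 α_ξ`.
-/

section ErrorEquations

variable {V L : Type*} [AddCommGroup V] [Module ℝ V] [AddCommGroup L] [Module ℝ L]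
  {a : V →ₗ[ℝ] V →ₗ[ℝ] ℝ} {b : L →ₗ[ℝ] V →ₗ[ℝ] ℝ} {s : L →ₗ[ℝ] L →ₗ[ℝ] ℝ}
  {Vh : Submodule ℝ V} {Lh Λh : Submodule ℝ L} {F : V → ℝ} {u uh : V} {lam lamh : L}

theorem primal_error_eq (hcont : ∀ (v : V) (μ : L), a u v + b lam v + b μ u = F v)
    (hdisc : ∀ v ∈ Vh, ∀ μ ∈ Λh, a uh v + b lamh v + b μ uh - s lamh μ = F v)
    (w : V) (ν : L) {v : V} (hv : v ∈ Vh) :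
    a (uh - w) v + b (lamh - ν) v = a (u - w) v + b (lam - ν) v := by
  have hc := hcont v 0
  have hd := hdisc v hv 0 Λh.zero_mem
  simp only [map_sub, LinearMap.sub_apply, map_zero, LinearMap.zero_apply] at hc hd ⊢
  linarith

theorem dual_error_eq (hcont : ∀ (v : V) (μ : L), a u v + b lam v + b μ u = F v)
    (hdisc : ∀ v ∈ Vh, ∀ μ ∈ Λh, a uh v + b lamh v + b μ uh - s lamh μ = F v)
    {πF : V →ₗ[ℝ] V} (hπF_orth : ∀ μ ∈ Lh, ∀ v : V, b μ (v - πF v) = 0)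
    {πL : L →ₗ[ℝ] L} (hπL_mem : ∀ x ∈ Λh, πL x ∈ Lh) {μ : L} (hμ : μ ∈ Λh) :
    b μ (uh - πF u) = s lamh μ + b (μ - πL μ) (u - πF u) := by
  have hc := hcont 0 μ
  have hcπ := hcont 0 (πL μ)
  have hd := hdisc 0 Vh.zero_mem μ hμ
  have horth := hπF_orth (πL μ) (hπL_mem μ hμ) u
  simp only [map_sub, LinearMap.sub_apply, map_zero] at hc hcπ hd horth ⊢
  linarith

end ErrorEquations

theorem LinearMap.abs_apply_le_sqrt_mul_sqrt_of_mem {L : Type*} [AddCommGroup L] [Module ℝ L]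
    {s : L →ₗ[ℝ] L →ₗ[ℝ] ℝ} {Λh : Submodule ℝ L}
    (hs_symm : ∀ x ∈ Λh, ∀ y ∈ Λh, s x y = s y x) (hs_pos : ∀ x ∈ Λh, 0 ≤ s x x)
    {x y : L} (hx : x ∈ Λh) (hy : y ∈ Λh) :
    |s x y| ≤ √(s x x) * √(s y y) := by
  have hCS := LinearMap.BilinForm.apply_mul_apply_le_of_forall_zero_le
    (s.compl₁₂ Λh.subtype Λh.subtype)
    (fun z ↦ hs_pos z z.2) ⟨x, hx⟩ ⟨y, hy⟩
  simp only [LinearMap.compl₁₂_apply, Submodule.subtype_apply] at hCS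
  rw [← hs_symm x hx y hy, ← sq] at hCS
  rw [← Real.sqrt_mul (hs_pos x hx)]
  exact Real.abs_le_sqrt hCS

theorem abs_apply_sub_proj_le {V L : Type*} [NormedAddCommGroup V] [Module ℝ V] [AddCommGroup L]
    [Module ℝ L] {b : L →ₗ[ℝ] V →ₗ[ℝ] ℝ} {s : L →ₗ[ℝ] L →ₗ[ℝ] ℝ} {Λh : Submodule ℝ L} {nL : L → ℝ}
    {πL : L →ₗ[ℝ] L} {Cπ Cs : ℝ} (hCπ : 0 ≤ Cπ)
    (hπL_cont : ∀ x ∈ Λh, ∀ v : V, |b (x - πL x) v| ≤ Cπ * nL (x - πL x) * ‖v‖)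
    (hs_pos : ∀ x ∈ Λh, 0 ≤ s x x) (hs_stab : ∀ x ∈ Λh, nL (x - πL x) ^ 2 ≤ Cs * s x x)
    {x : L} (hx : x ∈ Λh) (v : V) :
    |b (x - πL x) v| ≤ Cπ * √Cs * √(s x x) * ‖v‖ := by
  have hn : nL (x - πL x) ≤ √Cs * √(s x x) := by
    rw [← Real.sqrt_mul' Cs (hs_pos x hx)]
    exact (le_abs_self _).trans (Real.abs_le_sqrt (hs_stab x hx))
  calc |b (x - πL x) v| ≤ Cπ * nL (x - πL x) * ‖v‖ := hπL_cont x hx v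
    _ ≤ Cπ * (√Cs * √(s x x)) * ‖v‖ := by gcongr
    _ = Cπ * √Cs * √(s x x) * ‖v‖ := by ring

theorem add_le_of_sq_add_sq_le {α c K N S R : ℝ} (hN : 0 ≤ N) (hS : 0 ≤ S) (hR : 0 ≤ R)
    (hK : 0 ≤ K) (hc : c ^ 2 < 2 * α) (h : α * N ^ 2 + S ^ 2 ≤ c * N * S + K * R * (N + S)) :
    N + S ≤ 2 * K / min (α - c ^ 2 / 2) (1 / 2) * R := by
  set m := min (α - c ^ 2 / 2) (1 / 2)
  have hm : 0 < m := lt_min (by linarith) (by norm_num)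
  have hmα : m ≤ α - c ^ 2 / 2 := min_le_left _ _
  have hm2 : m ≤ 1 / 2 := min_le_right _ _
  -- Young's inequality `c N S ≤ c² N² / 2 + S² / 2`.
  have hquad : m * (N + S) * (N + S) ≤ 2 * K * R * (N + S) := by
    nlinarith [sq_nonneg (c * N - S), mul_nonneg hm.le (sq_nonneg (N - S)),
      mul_nonneg (sub_nonneg.2 hmα) (sq_nonneg N), mul_nonneg (sub_nonneg.2 hm2) (sq_nonneg S)]
  rw [div_mul_eq_mul_div, le_div_iff₀ hm]
  rcases (add_nonneg hN hS).eq_or_lt with hzero | hpos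
  · rw [← hzero, zero_mul]; positivity
  · rw [mul_comm]; exact le_of_mul_le_mul_right hquad hpos

theorem energy_identity {V L : Type*} [AddCommGroup V] [Module ℝ V] [AddCommGroup L] [Module ℝ L]
    {a : V →ₗ[ℝ] V →ₗ[ℝ] ℝ} {b : L →ₗ[ℝ] V →ₗ[ℝ] ℝ} {s : L →ₗ[ℝ] L →ₗ[ℝ] ℝ}
    {Λh : Submodule ℝ L} {πL : L →ₗ[ℝ] L}
    {η e : V} {ζ ν ρ ξ : L} (hζ : ζ ∈ Λh) (hξ : ξ ∈ Λh)
    (h_primal : a η η + b ζ η = a e η + b ρ η)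
    (h_dual : ∀ μ ∈ Λh, b μ η = s (ζ + ν) μ + b (μ - πL μ) e) :
    a η η + b ξ η + s ζ ζ = a e η + b ρ η - s ν ζ - b (ζ - πL ζ) e + s ζ ξ + s ν ξ
      + b (ξ - πL ξ) e := by
  have hζη := h_dual ζ hζ
  have hξη := h_dual ξ hξ
  simp only [map_add, LinearMap.add_apply] at hζη hξη
  linarith

theorem energy_estimate {V L : Type*} [NormedAddCommGroup V] [Module ℝ V]
    [NormedAddCommGroup L] [Module ℝ L]
    {a : V →ₗ[ℝ] V →ₗ[ℝ] ℝ} {b : L →ₗ[ℝ] V →ₗ[ℝ] ℝ} {s : L →ₗ[ℝ] L →ₗ[ℝ] ℝ}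
    {Vh : Submodule ℝ V} {Λh : Submodule ℝ L} {nVh : V → ℝ} {nL : L → ℝ}
    {πL : L →ₗ[ℝ] L} {ξh : V → L} {Ma Mb CV Cπ Cs αξ cs : ℝ}
    (hMa : 0 ≤ Ma) (ha_cont : ∀ u v : V, |a u v| ≤ Ma * ‖u‖ * ‖v‖)
    (hMb : 0 ≤ Mb) (hb_cont : ∀ (lam : L) (v : V), |b lam v| ≤ Mb * ‖lam‖ * ‖v‖)
    (hCV : 0 ≤ CV) (hnVh_nonneg : ∀ v ∈ Vh, 0 ≤ nVh v) (hV_comp : ∀ v ∈ Vh, ‖v‖ ≤ CV * nVh v)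
    (hCπ : 0 ≤ Cπ)
    (hπL_cont : ∀ x ∈ Λh, ∀ v : V, |b (x - πL x) v| ≤ Cπ * nL (x - πL x) * ‖v‖)
    (hs_symm : ∀ x ∈ Λh, ∀ y ∈ Λh, s x y = s y x) (hs_pos : ∀ x ∈ Λh, 0 ≤ s x x)
    (hs_stab : ∀ x ∈ Λh, nL (x - πL x) ^ 2 ≤ Cs * s x x)
    (hξh_mem : ∀ u ∈ Vh, ξh u ∈ Λh) (hcs : 0 ≤ cs)
    (hcoer : ∀ u ∈ Vh, αξ * nVh u ^ 2 ≤ a u u + b (ξh u) u)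
    (hξs : ∀ u ∈ Vh, √(s (ξh u) (ξh u)) ≤ cs * nVh u)
    {η e : V} {ζ ν ρ : L} (hη : η ∈ Vh) (hζ : ζ ∈ Λh) (hν : ν ∈ Λh)
    (h_primal : a η η + b ζ η = a e η + b ρ η)
    (h_dual : ∀ μ ∈ Λh, b μ η = s (ζ + ν) μ + b (μ - πL μ) e) :
    αξ * nVh η ^ 2 + √(s ζ ζ) ^ 2 ≤ cs * nVh η * √(s ζ ζ) +
      (Ma * CV + Mb * CV + 1 + Cπ * √Cs * (1 + cs) + cs) * (‖e‖ + ‖ρ‖ + √(s ν ν)) *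
        (nVh η + √(s ζ ζ)) := by
  set N := nVh η
  set S := √(s ζ ζ)
  set Sν := √(s ν ν)
  set R := ‖e‖ + ‖ρ‖ + Sν
  set X := ξh η
  have hX : X ∈ Λh := hξh_mem η hη
  have hSX : √(s X X) ≤ cs * N := hξs η hη
  have hid := energy_identity hζ hX h_primal h_dual
  have hS2 : S ^ 2 = s ζ ζ := Real.sq_sqrt (hs_pos ζ hζ)
  have hCS {x y : L} (hx : x ∈ Λh) (hy : y ∈ Λh) :=
    LinearMap.abs_apply_le_sqrt_mul_sqrt_of_mem hs_symm hs_pos hx hy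
  have hπ {x : L} (hx : x ∈ Λh) := abs_apply_sub_proj_le (b := b) hCπ hπL_cont hs_pos hs_stab hx
  have hηN : ‖η‖ ≤ CV * N := hV_comp η hη
  have hN : 0 ≤ N := hnVh_nonneg η hη
  have hS : 0 ≤ S := Real.sqrt_nonneg _
  have hSν : 0 ≤ Sν := Real.sqrt_nonneg _
  have t_a : |a e η| ≤ Ma * CV * (‖e‖ * N) := calc
    |a e η| ≤ Ma * ‖e‖ * ‖η‖ := ha_cont e η
    _ ≤ Ma * ‖e‖ * (CV * N) := by gcongr
    _ = Ma * CV * (‖e‖ * N) := by ring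
  have t_b : |b ρ η| ≤ Mb * CV * (‖ρ‖ * N) := calc
    |b ρ η| ≤ Mb * ‖ρ‖ * ‖η‖ := hb_cont ρ η
    _ ≤ Mb * ‖ρ‖ * (CV * N) := by gcongr
    _ = Mb * CV * (‖ρ‖ * N) := by ring
  have t_νζ : |s ν ζ| ≤ Sν * S := hCS hν hζ
  have t_ζX : |s ζ X| ≤ S * (cs * N) := (hCS hζ hX).trans (by gcongr)
  have t_νX : |s ν X| ≤ Sν * (cs * N) := (hCS hν hX).trans (by gcongr)
  have t_πζ : |b (ζ - πL ζ) e| ≤ Cπ * √Cs * S * ‖e‖ := hπ hζ e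
  have t_πX : |b (X - πL X) e| ≤ Cπ * √Cs * (cs * N) * ‖e‖ := (hπ hX e).trans (by gcongr)
  have hprod {c x y : ℝ} (hc : 0 ≤ c) (hx : 0 ≤ x) (hy : 0 ≤ y) (hxR : x ≤ R)
      (hyR : y ≤ N + S) : c * (x * y) ≤ c * (R * (N + S)) :=
    mul_le_mul_of_nonneg_left (mul_le_mul hxR hyR hy (hx.trans hxR)) hc
  have hCπs : 0 ≤ Cπ * √Cs := mul_nonneg hCπ (Real.sqrt_nonneg Cs)
  have he := norm_nonneg e
  have hρ := norm_nonneg ρ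
  linarith [hcoer η hη, abs_le.mp t_a, abs_le.mp t_b, abs_le.mp t_νζ, abs_le.mp t_ζX,
    abs_le.mp t_νX, abs_le.mp t_πζ, abs_le.mp t_πX,
    hprod (mul_nonneg hMa hCV) he hN (by linarith) (by linarith),
    hprod (mul_nonneg hMb hCV) hρ hN (by linarith) (by linarith),
    hprod zero_le_one hSν hS (by linarith) (by linarith),
    hprod hcs hSν hN (by linarith) (by linarith),
    hprod hCπs he hS (by linarith) (by linarith),
    hprod (mul_nonneg hCπs hcs) he hN (by linarith) (by linarith)]

theorem intermediate_primal_estimate_general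
    {V L : Type*} [NormedAddCommGroup V] [NormedSpace ℝ V]
    [NormedAddCommGroup L] [NormedSpace ℝ L]
    -- bilinear forms and their continuity
    (a : V →ₗ[ℝ] V →ₗ[ℝ] ℝ) (b : L →ₗ[ℝ] V →ₗ[ℝ] ℝ)
    (Ma : ℝ) (hMa : 0 < Ma)
    (ha_cont : ∀ u v : V, |a u v| ≤ Ma * ‖u‖ * ‖v‖)
    (Mb : ℝ) (hMb : 0 < Mb)
    (hb_cont : ∀ (lam : L) (v : V), |b lam v| ≤ Mb * ‖lam‖ * ‖v‖)
    -- discrete subspaces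
    (Vh : Submodule ℝ V) (Lh Λh : Submodule ℝ L)
    -- discrete norm on V_h
    (nVh : V → ℝ) (CV : ℝ) (hCV : 0 < CV)
    (hnVh_nonneg : ∀ v ∈ Vh, 0 ≤ nVh v)
    (hV_comp : ∀ v ∈ Vh, ‖v‖ ≤ CV * nVh v)
    -- discrete norm on L_h + Λ_h
    (nLh : L → ℝ)
    -- Fortin operator
    (πF : V →ₗ[ℝ] V) (hπF_mem : ∀ v : V, πF v ∈ Vh)
    (hπF_orth : ∀ μ ∈ Lh, ∀ v : V, b μ (v - πF v) = 0)
    -- stabilising projection π_L : Λ_h → L_h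
    (πL : L →ₗ[ℝ] L) (hπL_mem : ∀ x ∈ Λh, πL x ∈ Lh)
    (Cπ : ℝ) (hCπ : 0 < Cπ)
    (hπL_cont : ∀ x ∈ Λh, ∀ v : V, |b (x - πL x) v| ≤ Cπ * nLh (x - πL x) * ‖v‖)
    -- stabilisation form
    (s : L →ₗ[ℝ] L →ₗ[ℝ] ℝ)
    (hs_symm : ∀ x ∈ Λh, ∀ y ∈ Λh, s x y = s y x)
    (hs_pos : ∀ x ∈ Λh, 0 ≤ s x x)
    (Cs : ℝ)
    (hs_stab : ∀ x ∈ Λh, nLh (x - πL x) ^ 2 ≤ Cs * s x x)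
    -- coercivity assumption
    (ξh : V → L) (hξh_mem : ∀ u ∈ Vh, ξh u ∈ Λh)
    (αξ cs : ℝ) (hcs : 0 ≤ cs)
    (hcoer : ∀ u ∈ Vh, αξ * nVh u ^ 2 ≤ a u u + b (ξh u) u)
    (hξs : ∀ u ∈ Vh, Real.sqrt (s (ξh u) (ξh u)) ≤ cs * nVh u)
    (hsmall : cs ^ 2 < 2 * αξ) :
    ∃ C > 0, ∀ (F : V →L[ℝ] ℝ) (u : V) (lam : L) (uh : V) (lamh : L),
      uh ∈ Vh → lamh ∈ Λh →
      -- continuous problem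
      (∀ (v : V) (μ : L), a u v + b lam v + b μ u = F v) →
      -- stabilised discrete problem
      (∀ v ∈ Vh, ∀ μ ∈ Λh, a uh v + b lamh v + b μ uh - s lamh μ = F v) →
      ∀ ν ∈ Λh,
        nVh (uh - πF u) + Real.sqrt (s (lamh - ν) (lamh - ν)) ≤
          C * (‖u - πF u‖ + ‖lam - ν‖ + Real.sqrt (s ν ν)) := by
  refine ⟨2 * (Ma * CV + Mb * CV + 1 + Cπ * √Cs * (1 + cs) + cs) / min (αξ - cs ^ 2 / 2) (1 / 2),
    div_pos (by positivity) (lt_min (by linarith) (by norm_num)), ?_⟩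
  intro F u lam uh lamh huh hlamh hcont hdisc ν hν
  have hη : uh - πF u ∈ Vh := sub_mem huh (hπF_mem u)
  have h_dual : ∀ μ ∈ Λh,
      b μ (uh - πF u) = s (lamh - ν + ν) μ + b (μ - πL μ) (u - πF u) := fun μ hμ ↦ by
    rw [sub_add_cancel]
    exact dual_error_eq hcont hdisc hπF_orth hπL_mem hμ
  refine add_le_of_sq_add_sq_le (hnVh_nonneg _ hη) (Real.sqrt_nonneg _) (by positivity)
    (by positivity) hsmall ?_
  exact energy_estimate hMa.le ha_cont hMb.le hb_cont hCV.le hnVh_nonneg hV_comp hCπ.le hπL_cont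
    hs_symm hs_pos hs_stab hξh_mem hcs hcoer hξs hη (sub_mem hlamh hν) hν
    (primal_error_eq hcont hdisc (πF u) ν hη) h_dual

/-- **Intermediate primal estimate in the proof of Theorem 2.3 (equation (2.16)).**
With `η_h := u_h − π_F u` and `ζ_h := λ_h − ν_h`, one has
`‖η_h‖_{V_h} + s(ζ_h,ζ_h)^{1/2} ≤ C (‖u − π_F u‖_V + ‖λ − ν_h‖_L + s(ν_h,ν_h)^{1/2})`
for every `ν_h ∈ Λ_h`, with `C` depending only on the constants of the framework. -/
theorem intermediate_primal_estimate
    {V L : Type*} [NormedAddCommGroup V] [NormedSpace ℝ V]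
    [NormedAddCommGroup L] [NormedSpace ℝ L]
    -- bilinear forms and their continuity
    (a : V →ₗ[ℝ] V →ₗ[ℝ] ℝ) (b : L →ₗ[ℝ] V →ₗ[ℝ] ℝ)
    (Ma : ℝ) (hMa : 0 < Ma)
    (ha_cont : ∀ u v : V, |a u v| ≤ Ma * ‖u‖ * ‖v‖)
    (Mb : ℝ) (hMb : 0 < Mb)
    (hb_cont : ∀ (lam : L) (v : V), |b lam v| ≤ Mb * ‖lam‖ * ‖v‖)
    -- discrete subspaces
    (Vh : Submodule ℝ V) (Lh Λh : Submodule ℝ L)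
    -- discrete norm on V_h
    (nVh : V → ℝ) (CV : ℝ) (hCV : 0 < CV)
    (hnVh_nonneg : ∀ v ∈ Vh, 0 ≤ nVh v)
    (hnVh_def : ∀ v ∈ Vh, nVh v = 0 → v = 0)
    (hnVh_add : ∀ v ∈ Vh, ∀ w ∈ Vh, nVh (v + w) ≤ nVh v + nVh w)
    (hnVh_smul : ∀ (r : ℝ), ∀ v ∈ Vh, nVh (r • v) = |r| * nVh v)
    (hV_comp : ∀ v ∈ Vh, ‖v‖ ≤ CV * nVh v)
    -- discrete norm on L_h + Λ_h
    (nLh : L → ℝ)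
    (hnLh_nonneg : ∀ x ∈ Lh ⊔ Λh, 0 ≤ nLh x)
    (hnLh_def : ∀ x ∈ Lh ⊔ Λh, nLh x = 0 → x = 0)
    (hnLh_add : ∀ x ∈ Lh ⊔ Λh, ∀ y ∈ Lh ⊔ Λh, nLh (x + y) ≤ nLh x + nLh y)
    (hnLh_smul : ∀ (r : ℝ), ∀ x ∈ Lh ⊔ Λh, nLh (r • x) = |r| * nLh x)
    -- discrete continuities
    (ha_disc : ∀ u ∈ Vh, ∀ v ∈ Vh, |a u v| ≤ nVh u * nVh v)
    (hb_disc : ∀ lam ∈ Lh ⊔ Λh, ∀ v ∈ Vh, |b lam v| ≤ nLh lam * nVh v)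
    -- Fortin operator
    (πF : V →ₗ[ℝ] V) (hπF_mem : ∀ v : V, πF v ∈ Vh)
    (hπF_orth : ∀ μ ∈ Lh, ∀ v : V, b μ (v - πF v) = 0)
    (CF : ℝ) (hCF : 0 < CF)
    (hπF_stab : ∀ v : V, ‖πF v‖ ≤ CF * ‖v‖)
    -- stabilising projection π_L : Λ_h → L_h
    (πL : L →ₗ[ℝ] L) (hπL_mem : ∀ x ∈ Λh, πL x ∈ Lh)
    (Cπ : ℝ) (hCπ : 0 < Cπ)
    (hπL_cont : ∀ x ∈ Λh, ∀ v : V, |b (x - πL x) v| ≤ Cπ * nLh (x - πL x) * ‖v‖)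
    -- stabilisation form
    (s : L →ₗ[ℝ] L →ₗ[ℝ] ℝ)
    (hs_symm : ∀ x ∈ Λh, ∀ y ∈ Λh, s x y = s y x)
    (hs_pos : ∀ x ∈ Λh, 0 ≤ s x x)
    (Cs : ℝ) (hCs : 0 < Cs)
    (hs_stab : ∀ x ∈ Λh, nLh (x - πL x) ^ 2 ≤ Cs * s x x)
    -- coercivity assumption
    (ξh : V → L) (hξh_mem : ∀ u ∈ Vh, ξh u ∈ Λh)
    (αξ cs : ℝ) (hαξ : 0 < αξ) (hcs : 0 ≤ cs)
    (hcoer : ∀ u ∈ Vh, αξ * nVh u ^ 2 ≤ a u u + b (ξh u) u)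
    (hξs : ∀ u ∈ Vh, Real.sqrt (s (ξh u) (ξh u)) ≤ cs * nVh u)
    (hsmall : cs ^ 2 < 2 * αξ) :
    ∃ C > 0, ∀ (F : V →L[ℝ] ℝ) (u : V) (lam : L) (uh : V) (lamh : L),
      uh ∈ Vh → lamh ∈ Λh →
      -- continuous problem
      (∀ (v : V) (μ : L), a u v + b lam v + b μ u = F v) →
      -- stabilised discrete problem
      (∀ v ∈ Vh, ∀ μ ∈ Λh, a uh v + b lamh v + b μ uh - s lamh μ = F v) →
      ∀ ν ∈ Λh,
        nVh (uh - πF u) + Real.sqrt (s (lamh - ν) (lamh - ν)) ≤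
          C * (‖u - πF u‖ + ‖lam - ν‖ + Real.sqrt (s ν ν)) :=
  intermediate_primal_estimate_general a b Ma hMa ha_cont Mb hMb hb_cont Vh Lh Λh nVh CV hCV
    hnVh_nonneg hV_comp nLh πF hπF_mem hπF_orth πL hπL_mem Cπ hCπ hπL_cont s hs_symm hs_pos Cs
    hs_stab ξh hξh_mem αξ cs hcs hcoer hξs hsmall
end

section
/- Intermediate multiplier estimate in the proof of Theorem 2.3 (equation (2.19)): Suppose (u, λ) ∈ V × L solves the continuous problem and (u_h, λ_h) ∈ V_h × Λ_h solves the stabilised discrete problem with the same right-hand side F. Then there exists a constant C > 0, depending only on the constants of the framework, such that for every ν_h ∈ Λ_h, setting ζ_h := λ_h − ν_h, one has ‖ζ_h‖_L ≤ C · ( ‖λ − ν_h‖_L + ‖u − u_h‖_V + s(ζ_h, ζ_h)^{1/2} ). -/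
/-!
Testing the two problems with `μ = 0` and `v_h ∈ V_h` gives the Galerkin orthogonality
`b(λ_h − λ, v_h) = a(u − u_h, v_h)`. For `v ∈ V`, split `ζ_h = (ζ_h − π_L ζ_h) + π_L ζ_h`; since
`π_L ζ_h ∈ L_h`, the Fortin property moves the test function of the second part into `V_h`:
`b(ζ_h, v) = b(ζ_h − π_L ζ_h, v − π_F v) + a(u − u_h, π_F v) + b(λ − ν_h, π_F v)`.
The first term is controlled by `s(ζ_h, ζ_h)^{1/2}`, the others by continuity of `a`, `b`
and stability of `π_F`; the continuous inf-sup condition turns this bound on `b(ζ_h, ·)` into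
one on `‖ζ_h‖_L`.
-/

section Algebra

variable {R V L : Type*} [CommRing R] [AddCommGroup V] [Module R V] [AddCommGroup L] [Module R L]

theorem galerkin_orthogonality_of_mixed {a : V →ₗ[R] V →ₗ[R] R} {b : L →ₗ[R] V →ₗ[R] R}
    {s : L →ₗ[R] L →ₗ[R] R} {Vh : Submodule R V} {Λh : Submodule R L} {F : V → R}
    {u uh : V} {lam lamh : L}
    (hcont : ∀ (v : V) (μ : L), a u v + b lam v + b μ u = F v)
    (hdisc : ∀ v ∈ Vh, ∀ μ ∈ Λh, a uh v + b lamh v + b μ uh - s lamh μ = F v)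
    {v : V} (hv : v ∈ Vh) : b (lamh - lam) v = a (u - uh) v := by
  have hc := hcont v 0
  have hd := hdisc v hv 0 Λh.zero_mem
  simp only [map_zero, LinearMap.zero_apply, add_zero, sub_zero] at hc hd
  simp only [map_sub, LinearMap.sub_apply]
  linear_combination hd - hc

theorem apply_eq_of_fortin {b : L →ₗ[R] V →ₗ[R] R} {Lh : Submodule R L} {πF : V →ₗ[R] V}
    (hπF_orth : ∀ μ ∈ Lh, ∀ v : V, b μ (v - πF v) = 0) (ζ : L) {p : L} (hp : p ∈ Lh) (v : V) :
    b ζ v = b (ζ - p) v - b (ζ - p) (πF v) + b ζ (πF v) := by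
  have h := hπF_orth p hp v
  simp only [map_sub, LinearMap.sub_apply] at h ⊢
  linear_combination h

end Algebra

section Normed

variable {V L : Type*} [NormedAddCommGroup V] [NormedSpace ℝ V]
  [NormedAddCommGroup L] [NormedSpace ℝ L]

theorem mul_norm_le_of_infSup {b : L →ₗ[ℝ] V →ₗ[ℝ] ℝ} {β K : ℝ} {lam : L}
    (h_infsup : β * ‖lam‖ ≤ ⨆ v : {v : V // v ≠ 0}, b lam v.1 / ‖v.1‖) (hK : 0 ≤ K)
    (hbound : ∀ v : V, b lam v ≤ K * ‖v‖) : β * ‖lam‖ ≤ K :=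
  h_infsup.trans <|
    Real.iSup_le (fun v => (div_le_iff₀ (norm_pos_iff.2 v.2)).2 (hbound v.1)) hK

theorem abs_apply_le_of_stabilisation {b : L →ₗ[ℝ] V →ₗ[ℝ] ℝ} {nLh : L → ℝ}
    {s : L →ₗ[ℝ] L →ₗ[ℝ] ℝ} {Cπ Cs : ℝ} (hCπ : 0 ≤ Cπ) (hCs : 0 ≤ Cs) {x p : L}
    (hcont : ∀ v : V, |b (x - p) v| ≤ Cπ * nLh (x - p) * ‖v‖)
    (hstab : nLh (x - p) ^ 2 ≤ Cs * s x x) (v : V) :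
    |b (x - p) v| ≤ Cπ * √Cs * √(s x x) * ‖v‖ := by
  have hn : nLh (x - p) ≤ √Cs * √(s x x) := by
    rw [← Real.sqrt_mul hCs]
    exact (le_abs_self _).trans (Real.abs_le_sqrt hstab)
  calc |b (x - p) v| ≤ Cπ * nLh (x - p) * ‖v‖ := hcont v
    _ ≤ Cπ * (√Cs * √(s x x)) * ‖v‖ := by gcongr
    _ = Cπ * √Cs * √(s x x) * ‖v‖ := by ring

theorem apply_le_of_fortin_of_stabilisation (a : V →ₗ[ℝ] V →ₗ[ℝ] ℝ) (b : L →ₗ[ℝ] V →ₗ[ℝ] ℝ)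
    {Ma Mb CF Cπ Cs : ℝ} (hMa : 0 ≤ Ma) (hMb : 0 ≤ Mb) (hCπ : 0 ≤ Cπ) (hCs : 0 ≤ Cs)
    (ha_cont : ∀ u v : V, |a u v| ≤ Ma * ‖u‖ * ‖v‖)
    (hb_cont : ∀ (lam : L) (v : V), |b lam v| ≤ Mb * ‖lam‖ * ‖v‖)
    {Vh : Submodule ℝ V} {Lh : Submodule ℝ L} {nLh : L → ℝ} {s : L →ₗ[ℝ] L →ₗ[ℝ] ℝ}
    {πF : V →ₗ[ℝ] V} (hπF_mem : ∀ v : V, πF v ∈ Vh)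
    (hπF_orth : ∀ μ ∈ Lh, ∀ v : V, b μ (v - πF v) = 0)
    (hπF_stab : ∀ v : V, ‖πF v‖ ≤ CF * ‖v‖)
    {u uh : V} {lam lamh ν p : L} (hp : p ∈ Lh)
    (hcont : ∀ v : V, |b (lamh - ν - p) v| ≤ Cπ * nLh (lamh - ν - p) * ‖v‖)
    (hstab : nLh (lamh - ν - p) ^ 2 ≤ Cs * s (lamh - ν) (lamh - ν))
    (hgal : ∀ v ∈ Vh, b (lamh - lam) v = a (u - uh) v) (v : V) :
    b (lamh - ν) v ≤ (Mb * CF * ‖lam - ν‖ + Ma * CF * ‖u - uh‖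
      + Cπ * (1 + CF) * √Cs * √(s (lamh - ν) (lamh - ν))) * ‖v‖ := by
  set d := lamh - ν - p
  set σ := √(s (lamh - ν) (lamh - ν))
  have hsplit : b (lamh - ν) v
      = b d v - b d (πF v) + a (u - uh) (πF v) + b (lam - ν) (πF v) := by
    have hζ : b (lamh - ν) (πF v) = b (lamh - lam) (πF v) + b (lam - ν) (πF v) := by
      simp only [map_sub, LinearMap.sub_apply]; ring
    rw [apply_eq_of_fortin hπF_orth _ hp v, hζ, hgal _ (hπF_mem v)]
    ring
  have hd := abs_apply_le_of_stabilisation hCπ hCs hcont hstab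
  have hπF := hπF_stab v
  calc b (lamh - ν) v
      ≤ |b d v| + |b d (πF v)| + |a (u - uh) (πF v)| + |b (lam - ν) (πF v)| := by
        rw [hsplit]
        linarith [le_abs_self (b d v), neg_abs_le (b d (πF v)),
          le_abs_self (a (u - uh) (πF v)), le_abs_self (b (lam - ν) (πF v))]
    _ ≤ Cπ * √Cs * σ * ‖v‖ + Cπ * √Cs * σ * (CF * ‖v‖)
        + Ma * ‖u - uh‖ * (CF * ‖v‖) + Mb * ‖lam - ν‖ * (CF * ‖v‖) := by
        gcongr
        · exact hd v
        · exact (hd _).trans (by gcongr)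
        · exact (ha_cont _ _).trans (by gcongr)
        · exact (hb_cont _ _).trans (by gcongr)
    _ = (Mb * CF * ‖lam - ν‖ + Ma * CF * ‖u - uh‖ + Cπ * (1 + CF) * √Cs * σ) * ‖v‖ := by
        ring

end Normed

theorem intermediate_multiplier_estimate_general
    {V L : Type*} [NormedAddCommGroup V] [NormedSpace ℝ V]
    [NormedAddCommGroup L] [NormedSpace ℝ L]
    -- bilinear forms and their continuity
    (a : V →ₗ[ℝ] V →ₗ[ℝ] ℝ) (b : L →ₗ[ℝ] V →ₗ[ℝ] ℝ)
    (Ma : ℝ) (hMa : 0 < Ma)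
    (ha_cont : ∀ u v : V, |a u v| ≤ Ma * ‖u‖ * ‖v‖)
    (Mb : ℝ) (hMb : 0 < Mb)
    (hb_cont : ∀ (lam : L) (v : V), |b lam v| ≤ Mb * ‖lam‖ * ‖v‖)
    -- continuous inf-sup condition
    (β : ℝ) (hβ : 0 < β)
    (h_infsup : ∀ lam : L, β * ‖lam‖ ≤ ⨆ v : {v : V // v ≠ 0}, b lam v.1 / ‖v.1‖)
    -- discrete subspaces
    (Vh : Submodule ℝ V) (Lh Λh : Submodule ℝ L)
    -- discrete norm on L_h + Λ_h
    (nLh : L → ℝ)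
    -- Fortin operator
    (πF : V →ₗ[ℝ] V) (hπF_mem : ∀ v : V, πF v ∈ Vh)
    (hπF_orth : ∀ μ ∈ Lh, ∀ v : V, b μ (v - πF v) = 0)
    (CF : ℝ) (hCF : 0 < CF)
    (hπF_stab : ∀ v : V, ‖πF v‖ ≤ CF * ‖v‖)
    -- stabilising projection π_L : Λ_h → L_h
    (πL : L →ₗ[ℝ] L) (hπL_mem : ∀ x ∈ Λh, πL x ∈ Lh)
    (Cπ : ℝ) (hCπ : 0 < Cπ)
    (hπL_cont : ∀ x ∈ Λh, ∀ v : V, |b (x - πL x) v| ≤ Cπ * nLh (x - πL x) * ‖v‖)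
    -- stabilisation form
    (s : L →ₗ[ℝ] L →ₗ[ℝ] ℝ)
    (Cs : ℝ) (hCs : 0 < Cs)
    (hs_stab : ∀ x ∈ Λh, nLh (x - πL x) ^ 2 ≤ Cs * s x x) :
    ∃ C > 0, ∀ (F : V →L[ℝ] ℝ) (u : V) (lam : L) (uh : V) (lamh : L),
      uh ∈ Vh → lamh ∈ Λh →
      -- continuous problem
      (∀ (v : V) (μ : L), a u v + b lam v + b μ u = F v) →
      -- stabilised discrete problem
      (∀ v ∈ Vh, ∀ μ ∈ Λh, a uh v + b lamh v + b μ uh - s lamh μ = F v) →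
      ∀ ν ∈ Λh,
        ‖lamh - ν‖ ≤
          C * (‖lam - ν‖ + ‖u - uh‖ +
            Real.sqrt (s (lamh - ν) (lamh - ν))) := by
  set P := Mb * CF
  set Q := Ma * CF
  set R := Cπ * (1 + CF) * √Cs
  refine ⟨(P + Q + R) / β, by positivity, ?_⟩
  intro F u lam uh lamh _ hlamh hcont hdisc ν hν
  have hζ : lamh - ν ∈ Λh := sub_mem hlamh hν
  have hbound := apply_le_of_fortin_of_stabilisation a b hMa.le hMb.le hCπ.le hCs.le
    ha_cont hb_cont hπF_mem hπF_orth hπF_stab (hπL_mem _ hζ) (hπL_cont _ hζ) (hs_stab _ hζ)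
    (fun v hv => galerkin_orthogonality_of_mixed hcont hdisc hv)
  have hβζ := mul_norm_le_of_infSup (h_infsup _) (by positivity) hbound
  rw [div_mul_eq_mul_div, le_div_iff₀ hβ, mul_comm]
  refine hβζ.trans ?_
  have : 0 ≤ √(s (lamh - ν) (lamh - ν)) := Real.sqrt_nonneg _
  nlinarith [norm_nonneg (lam - ν), norm_nonneg (u - uh),
    show 0 ≤ P by positivity, show 0 ≤ Q by positivity, show 0 ≤ R by positivity]

/-- **Intermediate multiplier estimate in the proof of Theorem 2.3 (equation (2.19)).**
With `ζ_h := λ_h − ν_h`, one has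
`‖ζ_h‖_L ≤ C (‖λ − ν_h‖_L + ‖u − u_h‖_V + s(ζ_h,ζ_h)^{1/2})`
for every `ν_h ∈ Λ_h`, with `C` depending only on the constants of the framework. -/
theorem intermediate_multiplier_estimate
    {V L : Type*} [NormedAddCommGroup V] [NormedSpace ℝ V]
    [NormedAddCommGroup L] [NormedSpace ℝ L]
    -- bilinear forms and their continuity
    (a : V →ₗ[ℝ] V →ₗ[ℝ] ℝ) (b : L →ₗ[ℝ] V →ₗ[ℝ] ℝ)
    (Ma : ℝ) (hMa : 0 < Ma)
    (ha_cont : ∀ u v : V, |a u v| ≤ Ma * ‖u‖ * ‖v‖)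
    (Mb : ℝ) (hMb : 0 < Mb)
    (hb_cont : ∀ (lam : L) (v : V), |b lam v| ≤ Mb * ‖lam‖ * ‖v‖)
    -- continuous inf-sup condition
    (β : ℝ) (hβ : 0 < β)
    (h_infsup : ∀ lam : L, β * ‖lam‖ ≤ ⨆ v : {v : V // v ≠ 0}, b lam v.1 / ‖v.1‖)
    -- discrete subspaces
    (Vh : Submodule ℝ V) (Lh Λh : Submodule ℝ L)
    -- discrete norm on V_h
    (nVh : V → ℝ) (CV : ℝ) (hCV : 0 < CV)
    (hnVh_nonneg : ∀ v ∈ Vh, 0 ≤ nVh v)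
    (hnVh_def : ∀ v ∈ Vh, nVh v = 0 → v = 0)
    (hnVh_add : ∀ v ∈ Vh, ∀ w ∈ Vh, nVh (v + w) ≤ nVh v + nVh w)
    (hnVh_smul : ∀ (r : ℝ), ∀ v ∈ Vh, nVh (r • v) = |r| * nVh v)
    (hV_comp : ∀ v ∈ Vh, ‖v‖ ≤ CV * nVh v)
    -- discrete norm on L_h + Λ_h
    (nLh : L → ℝ)
    (hnLh_nonneg : ∀ x ∈ Lh ⊔ Λh, 0 ≤ nLh x)
    (hnLh_def : ∀ x ∈ Lh ⊔ Λh, nLh x = 0 → x = 0)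
    (hnLh_add : ∀ x ∈ Lh ⊔ Λh, ∀ y ∈ Lh ⊔ Λh, nLh (x + y) ≤ nLh x + nLh y)
    (hnLh_smul : ∀ (r : ℝ), ∀ x ∈ Lh ⊔ Λh, nLh (r • x) = |r| * nLh x)
    -- Fortin operator
    (πF : V →ₗ[ℝ] V) (hπF_mem : ∀ v : V, πF v ∈ Vh)
    (hπF_orth : ∀ μ ∈ Lh, ∀ v : V, b μ (v - πF v) = 0)
    (CF : ℝ) (hCF : 0 < CF)
    (hπF_stab : ∀ v : V, ‖πF v‖ ≤ CF * ‖v‖)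
    -- stabilising projection π_L : Λ_h → L_h
    (πL : L →ₗ[ℝ] L) (hπL_mem : ∀ x ∈ Λh, πL x ∈ Lh)
    (Cπ : ℝ) (hCπ : 0 < Cπ)
    (hπL_cont : ∀ x ∈ Λh, ∀ v : V, |b (x - πL x) v| ≤ Cπ * nLh (x - πL x) * ‖v‖)
    -- stabilisation form
    (s : L →ₗ[ℝ] L →ₗ[ℝ] ℝ)
    (hs_symm : ∀ x ∈ Λh, ∀ y ∈ Λh, s x y = s y x)
    (hs_pos : ∀ x ∈ Λh, 0 ≤ s x x)
    (Cs : ℝ) (hCs : 0 < Cs)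
    (hs_stab : ∀ x ∈ Λh, nLh (x - πL x) ^ 2 ≤ Cs * s x x) :
    ∃ C > 0, ∀ (F : V →L[ℝ] ℝ) (u : V) (lam : L) (uh : V) (lamh : L),
      uh ∈ Vh → lamh ∈ Λh →
      -- continuous problem
      (∀ (v : V) (μ : L), a u v + b lam v + b μ u = F v) →
      -- stabilised discrete problem
      (∀ v ∈ Vh, ∀ μ ∈ Λh, a uh v + b lamh v + b μ uh - s lamh μ = F v) →
      ∀ ν ∈ Λh,
        ‖lamh - ν‖ ≤
          C * (‖lam - ν‖ + ‖u - uh‖ +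
            Real.sqrt (s (lamh - ν) (lamh - ν))) :=
  intermediate_multiplier_estimate_general a b Ma hMa ha_cont Mb hMb hb_cont β hβ h_infsup Vh Lh Λh
    nLh πF hπF_mem hπF_orth CF hCF hπF_stab πL hπL_mem Cπ hCπ hπL_cont s Cs hCs hs_stab
end

section
/- Coercivity of the Barbosa–Hughes form with the constructed test functions (key step in the proof of Theorem 4.2): Under the abstract Nitsche/Barbosa–Hughes framework, there exist ζ ∈ (0,1] and a constant C > 0, both depending only on γ, c_t, c_w, c_∂, C_z and c_z, such that for every (u_h, λ_h) ∈ V_h × Λ_h there exists a pair (w_h, μ_h) ∈ V_h × Λ_h of the form w_h = u_h + ζ·φ_∂ and μ_h = λ_h + z(ζ·φ_∂), where φ_∂ is the function provided by the Nitsche stability hypothesis for u_h and z is the map of Assumption A1, satisfying A_BH[(u_h, λ_h), (w_h, μ_h)] ≥ (c_w/2)·‖u_h‖²_{1,h} + (γ/2)·‖j λ_h + d u_h‖²_B and ‖w_h‖_{1,h} + ‖j μ_h‖_B ≤ C·( ‖u_h‖_{1,h} + ‖j λ_h‖_B ). -/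
/-!
Testing with `(u + ζ φ_∂, λ + z(ζ φ_∂))` gives `A_BH = A_Nit(u, u + ζ φ_∂) + γ ‖j λ + d u‖²` plus
three cross terms: the residual `⟪j λ + d u, t (ζ φ_∂)⟫`, the defect `⟪j z + d (ζ φ_∂), t u⟫` of
Assumption A1 and `γ ⟪j λ + d u, j z + d (ζ φ_∂)⟫`. Since `‖ζ φ_∂‖_{1,h} ≤ ζ c_∂ ‖t u‖`, each is
`O(ζ) ‖t u‖` times `‖G u‖` or `‖j λ + d u‖`, so for small `ζ` Young's inequality absorbs them into
half of the Nitsche coercivity and half of the stabilisation. The test pair is bounded because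
`‖j z(v)‖ ≤ c_z ‖G v‖`.
-/

open Filter Topology
open scoped RealInnerProductSpace

lemma mul_mul_le_of_sq_le_mul {a b c p q : ℝ} (hp : 0 < p) (hc : c ^ 2 ≤ p * q) :
    c * a * b ≤ (p * a ^ 2 + q * b ^ 2) / 2 := by
  nlinarith [sq_nonneg (p * a - c * b), mul_nonneg (sub_nonneg.2 hc) (sq_nonneg b)]

lemma eventually_mul_mul_sq_le (a m : ℝ) {b : ℝ} (hb : 0 < b) :
    ∀ᶠ ζ in 𝓝[>] 0, (ζ * a * m) ^ 2 ≤ b := by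
  have h : Continuous (fun ζ : ℝ => (ζ * a * m) ^ 2) := by fun_prop
  replace h : Tendsto (fun ζ : ℝ => (ζ * a * m) ^ 2) (𝓝 0) (𝓝 0) := by simpa using h.tendsto 0
  exact (h.mono_left nhdsWithin_le_nhds).eventually_le_const hb

section NormOneH

variable {X B Vh : Type*} [SeminormedAddCommGroup X] [NormedSpace ℝ X]
  [SeminormedAddCommGroup B] [NormedSpace ℝ B] [AddCommGroup Vh] [Module ℝ Vh]
  (G : Vh →ₗ[ℝ] X) (t : Vh →ₗ[ℝ] B)

noncomputable def normOneH (u : Vh) : ℝ := √(‖G u‖ ^ 2 + ‖t u‖ ^ 2)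

lemma normOneH_eq_norm (u : Vh) : normOneH G t u = ‖WithLp.toLp 2 (G u, t u)‖ := by
  rw [WithLp.prod_norm_eq_of_L2]
  rfl

lemma normOneH_add_le (u v : Vh) : normOneH G t (u + v) ≤ normOneH G t u + normOneH G t v := by
  simp only [normOneH_eq_norm, map_add, ← Prod.mk_add_mk, WithLp.toLp_add]
  exact norm_add_le _ _

lemma normOneH_smul (c : ℝ) (u : Vh) : normOneH G t (c • u) = |c| * normOneH G t u := by
  simp only [normOneH_eq_norm, map_smul, ← Prod.smul_mk, WithLp.toLp_smul, norm_smul,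
    Real.norm_eq_abs]

lemma norm_le_normOneH_left (u : Vh) : ‖G u‖ ≤ normOneH G t u :=
  Real.le_sqrt_of_sq_le (le_add_of_nonneg_right (sq_nonneg _))

lemma norm_le_normOneH_right (u : Vh) : ‖t u‖ ≤ normOneH G t u :=
  Real.le_sqrt_of_sq_le (le_add_of_nonneg_left (sq_nonneg _))

end NormOneH

section Forms

variable {X B Vh Λh : Type*} [NormedAddCommGroup X] [InnerProductSpace ℝ X]
  [NormedAddCommGroup B] [InnerProductSpace ℝ B] [AddCommGroup Vh] [Module ℝ Vh]
  [AddCommGroup Λh] [Module ℝ Λh]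
  (G : Vh →ₗ[ℝ] X) (t d : Vh →ₗ[ℝ] B) (j : Λh →ₗ[ℝ] B)

lemma neg_norm_mul_le_real_inner (x : B) {y : B} {b : ℝ} (hy : ‖y‖ ≤ b) :
    -(‖x‖ * b) ≤ ⟪x, y⟫ :=
  (neg_le_neg (mul_le_mul_of_nonneg_left hy (norm_nonneg x))).trans
    (neg_le_of_abs_le (abs_real_inner_le_norm x y))

def nitscheForm (u v : Vh) : ℝ := ⟪G u, G v⟫ - ⟪d u, t v⟫ + ⟪d v, t u⟫

def barbosaHughesForm (γ : ℝ) (u : Vh) (lam : Λh) (v : Vh) (μ : Λh) : ℝ :=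
  ⟪G u, G v⟫ + ⟪j lam, t v⟫ - ⟪j μ, t u⟫ + γ * ⟪j lam + d u, j μ + d v⟫

lemma barbosaHughesForm_add_eq (γ : ℝ) (u v : Vh) (lam ν : Λh) :
    barbosaHughesForm G t d j γ u lam (u + v) (lam + ν) =
      nitscheForm G t d u (u + v) + ⟪j lam + d u, t v⟫ - ⟪j ν + d v, t u⟫
        + γ * ‖j lam + d u‖ ^ 2 + γ * ⟪j lam + d u, j ν + d v⟫ := by
  rw [← real_inner_self_eq_norm_sq]
  simp only [barbosaHughesForm, nitscheForm, map_add, inner_add_left, inner_add_right]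
  ring

lemma le_barbosaHughesForm_add {γ cw Cz c κ : ℝ} (hγ : 0 < γ) (hcw : 0 < cw)
    {u v : Vh} {lam ν : Λh}
    (hNit : cw * (‖G u‖ ^ 2 + ‖t u‖ ^ 2) ≤ nitscheForm G t d u (u + v))
    (htv : ‖t v‖ ≤ κ * ‖t u‖)
    (hcons : |⟪j ν + d v, t u⟫| ≤ Cz * κ * ‖G u‖ * ‖t u‖)
    (hσ : ‖j ν + d v‖ ≤ c * κ * ‖t u‖)
    (hκ₁ : (κ * (1 + γ * c)) ^ 2 ≤ γ * (cw / 2))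
    (hκ₂ : (κ * Cz) ^ 2 ≤ cw / 2 * (cw / 2)) :
    cw / 2 * (‖G u‖ ^ 2 + ‖t u‖ ^ 2) + γ / 2 * ‖j lam + d u‖ ^ 2 ≤
      barbosaHughesForm G t d j γ u lam (u + v) (lam + ν) := by
  set r := j lam + d u
  have hres := neg_norm_mul_le_real_inner r htv
  have hstab := mul_le_mul_of_nonneg_left (neg_norm_mul_le_real_inner r hσ) hγ.le
  have young₁ := mul_mul_le_of_sq_le_mul (a := ‖r‖) (b := ‖t u‖) hγ hκ₁
  have young₂ := mul_mul_le_of_sq_le_mul (a := ‖G u‖) (b := ‖t u‖) (half_pos hcw) hκ₂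
  rw [barbosaHughesForm_add_eq]
  linarith [le_abs_self ⟪j ν + d v, t u⟫, mul_nonneg hcw.le (sq_nonneg ‖G u‖)]

lemma normOneH_add_add_norm_le {cb cz κ : ℝ} (hcb : 0 ≤ cb) (hcz : 0 ≤ cz) (hκ : κ ≤ cb)
    {u v : Vh} {lam ν : Λh} (hv : normOneH G t v ≤ κ * ‖t u‖) (hν : ‖j ν‖ ≤ cz * ‖G v‖) :
    normOneH G t (u + v) + ‖j (lam + ν)‖ ≤ (1 + cb + cz * cb) * (normOneH G t u + ‖j lam‖) := by
  have hv' : normOneH G t v ≤ cb * normOneH G t u :=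
    hv.trans ((mul_le_mul_of_nonneg_right hκ (norm_nonneg _)).trans
      (mul_le_mul_of_nonneg_left (norm_le_normOneH_right G t u) hcb))
  have hw := normOneH_add_le G t u v
  have hμ : ‖j (lam + ν)‖ ≤ ‖j lam‖ + cz * (cb * normOneH G t u) := by
    rw [map_add]
    exact (norm_add_le _ _).trans (add_le_add le_rfl (hν.trans
      (mul_le_mul_of_nonneg_left ((norm_le_normOneH_left G t v).trans hv') hcz)))
  linarith [mul_nonneg (add_nonneg hcb (mul_nonneg hcz hcb)) (norm_nonneg (j lam))]

end Forms

theorem barbosa_hughes_coercivity_key_step_general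
    {X B : Type*} [NormedAddCommGroup X] [InnerProductSpace ℝ X]
    [NormedAddCommGroup B] [InnerProductSpace ℝ B]
    {Vh Λh : Type*} [AddCommGroup Vh] [Module ℝ Vh]
    [AddCommGroup Λh] [Module ℝ Λh]
    (G : Vh →ₗ[ℝ] X) (t d : Vh →ₗ[ℝ] B) (j : Λh →ₗ[ℝ] B)
    -- stabilisation parameter
    (γ : ℝ) (hγ : 0 < γ)
    -- discrete trace inequality
    (ct : ℝ) (hct : 0 < ct) (htrace : ∀ u : Vh, ‖d u‖ ≤ ct * ‖G u‖)
    -- stability of the penalty-free non-symmetric Nitsche method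
    (cw cb : ℝ) (hcw : 0 < cw) (hcb : 0 < cb)
    (hNit : ∀ ζ : ℝ, 0 < ζ → ζ ≤ 1 → ∀ u : Vh, ∃ φ : Vh,
      Real.sqrt (‖G φ‖ ^ 2 + ‖t φ‖ ^ 2) ≤ cb * ‖t u‖ ∧
      cw * (‖G u‖ ^ 2 + ‖t u‖ ^ 2) ≤
        ⟪G u, G (u + ζ • φ)⟫ - ⟪d u, t (u + ζ • φ)⟫ + ⟪d (u + ζ • φ), t u⟫)
    -- Assumption [A1], with its map z : V_h → Λ_h
    (Cz cz : ℝ) (hCz : 0 < Cz) (hcz : 0 < cz)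
    (z : Vh → Λh)
    (hA1 : ∀ v : Vh,
      (∀ u : Vh, |⟪j (z v) + d v, t u⟫| ≤ Cz * ‖G u‖ * ‖G v‖) ∧
      ‖j (z v)‖ ≤ cz * ‖G v‖) :
    ∃ ζ : ℝ, 0 < ζ ∧ ζ ≤ 1 ∧ ∃ C > 0, ∀ (u : Vh) (lam : Λh), ∃ φ : Vh,
      -- φ is the function provided by the Nitsche stability hypothesis for u at ζ
      (Real.sqrt (‖G φ‖ ^ 2 + ‖t φ‖ ^ 2) ≤ cb * ‖t u‖ ∧
        cw * (‖G u‖ ^ 2 + ‖t u‖ ^ 2) ≤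
          ⟪G u, G (u + ζ • φ)⟫ - ⟪d u, t (u + ζ • φ)⟫ + ⟪d (u + ζ • φ), t u⟫) ∧
      -- coercivity of the Barbosa–Hughes form with w = u + ζ•φ, μ = λ + z(ζ•φ)
      ((cw / 2) * (‖G u‖ ^ 2 + ‖t u‖ ^ 2) + (γ / 2) * ‖j lam + d u‖ ^ 2 ≤
        ⟪G u, G (u + ζ • φ)⟫ + ⟪j lam, t (u + ζ • φ)⟫
          - ⟪j (lam + z (ζ • φ)), t u⟫
          + γ * ⟪j lam + d u, j (lam + z (ζ • φ)) + d (u + ζ • φ)⟫) ∧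
      -- stability of the constructed test pair
      (Real.sqrt (‖G (u + ζ • φ)‖ ^ 2 + ‖t (u + ζ • φ)‖ ^ 2) + ‖j (lam + z (ζ • φ))‖ ≤
        C * (Real.sqrt (‖G u‖ ^ 2 + ‖t u‖ ^ 2) + ‖j lam‖)) := by
  obtain ⟨ζ, ⟨⟨hζ1, hκ₁⟩, hκ₂⟩, hζ0⟩ : ∃ ζ : ℝ, ((ζ ≤ 1 ∧
      (ζ * cb * (1 + γ * (cz + ct))) ^ 2 ≤ γ * (cw / 2)) ∧
      (ζ * cb * Cz) ^ 2 ≤ cw / 2 * (cw / 2)) ∧ 0 < ζ :=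
    (((eventually_le_nhds one_pos).filter_mono nhdsWithin_le_nhds |>.and
      (eventually_mul_mul_sq_le _ _ (by positivity))).and
      (eventually_mul_mul_sq_le _ _ (by positivity))).and self_mem_nhdsWithin |>.exists
  refine ⟨ζ, hζ0, hζ1, 1 + cb + cz * cb, by positivity, fun u lam => ?_⟩
  obtain ⟨φ, hφ, hNitφ⟩ := hNit ζ hζ0 hζ1 u
  obtain ⟨hz_cons, hz_bound⟩ := hA1 (ζ • φ)
  have hv : normOneH G t (ζ • φ) ≤ ζ * cb * ‖t u‖ := by
    rw [normOneH_smul, abs_of_pos hζ0, mul_assoc]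
    exact mul_le_mul_of_nonneg_left hφ hζ0.le
  have hGv : ‖G (ζ • φ)‖ ≤ ζ * cb * ‖t u‖ := (norm_le_normOneH_left G t _).trans hv
  have hcons : |⟪j (z (ζ • φ)) + d (ζ • φ), t u⟫| ≤ Cz * (ζ * cb) * ‖G u‖ * ‖t u‖ :=
    calc _ ≤ Cz * ‖G u‖ * ‖G (ζ • φ)‖ := hz_cons u
      _ ≤ Cz * ‖G u‖ * (ζ * cb * ‖t u‖) := by gcongr
      _ = _ := by ring
  have hσ : ‖j (z (ζ • φ)) + d (ζ • φ)‖ ≤ (cz + ct) * (ζ * cb) * ‖t u‖ :=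
    calc _ ≤ ‖j (z (ζ • φ))‖ + ‖d (ζ • φ)‖ := norm_add_le _ _
      _ ≤ (cz + ct) * ‖G (ζ • φ)‖ := by linarith [htrace (ζ • φ)]
      _ ≤ (cz + ct) * (ζ * cb * ‖t u‖) := mul_le_mul_of_nonneg_left hGv (by positivity)
      _ = _ := by ring
  exact ⟨φ, ⟨hφ, hNitφ⟩,
    le_barbosaHughesForm_add G t d j hγ hcw hNitφ ((norm_le_normOneH_right G t _).trans hv)
      hcons hσ hκ₁ hκ₂,
    normOneH_add_add_norm_le G t j hcb.le hcz.le (mul_le_of_le_one_left hcb.le hζ1) hv hz_bound⟩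

/-- **Coercivity of the Barbosa–Hughes form with the constructed test functions
(key step in the proof of Theorem 4.2).**
There exist `ζ ∈ (0,1]` and `C > 0` (depending only on `γ, c_t, c_w, c_∂, C_z, c_z`) such
that for every `(u_h, λ_h)` there is a pair `(w_h, μ_h) = (u_h + ζ φ_∂, λ_h + z(ζ φ_∂))`,
with `φ_∂` the function provided by the Nitsche stability hypothesis for `u_h` and `z` the
map of Assumption A1, satisfying
`A_BH[(u_h,λ_h),(w_h,μ_h)] ≥ (c_w/2) ‖u_h‖²_{1,h} + (γ/2) ‖j λ_h + d u_h‖²_B` and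
`‖w_h‖_{1,h} + ‖j μ_h‖_B ≤ C (‖u_h‖_{1,h} + ‖j λ_h‖_B)`.
Here `‖u‖_{1,h} = (‖G u‖² + ‖t u‖²)^{1/2}`,
`A_Nit(u,v) = ⟪G u, G v⟫ − ⟪d u, t v⟫ + ⟪d v, t u⟫` and
`A_BH[(u,λ),(v,μ)] = ⟪G u, G v⟫ + ⟪j λ, t v⟫ − ⟪j μ, t u⟫ + γ ⟪j λ + d u, j μ + d v⟫`. -/
theorem barbosa_hughes_coercivity_key_step
    {X B : Type*} [NormedAddCommGroup X] [InnerProductSpace ℝ X]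
    [NormedAddCommGroup B] [InnerProductSpace ℝ B]
    {Vh Λh : Type*} [AddCommGroup Vh] [Module ℝ Vh] [FiniteDimensional ℝ Vh]
    [AddCommGroup Λh] [Module ℝ Λh] [FiniteDimensional ℝ Λh]
    (G : Vh →ₗ[ℝ] X) (t d : Vh →ₗ[ℝ] B) (j : Λh →ₗ[ℝ] B)
    (hj : Function.Injective j)
    -- ‖·‖_{1,h} is a norm on V_h (only definiteness is not automatic)
    (hdef : ∀ u : Vh, G u = 0 → t u = 0 → u = 0)
    -- stabilisation parameter
    (γ : ℝ) (hγ : 0 < γ)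
    -- discrete trace inequality
    (ct : ℝ) (hct : 0 < ct) (htrace : ∀ u : Vh, ‖d u‖ ≤ ct * ‖G u‖)
    -- stability of the penalty-free non-symmetric Nitsche method
    (cw cb : ℝ) (hcw : 0 < cw) (hcb : 0 < cb)
    (hNit : ∀ ζ : ℝ, 0 < ζ → ζ ≤ 1 → ∀ u : Vh, ∃ φ : Vh,
      Real.sqrt (‖G φ‖ ^ 2 + ‖t φ‖ ^ 2) ≤ cb * ‖t u‖ ∧
      cw * (‖G u‖ ^ 2 + ‖t u‖ ^ 2) ≤
        ⟪G u, G (u + ζ • φ)⟫ - ⟪d u, t (u + ζ • φ)⟫ + ⟪d (u + ζ • φ), t u⟫)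
    -- Assumption [A1], with its map z : V_h → Λ_h
    (Cz cz : ℝ) (hCz : 0 < Cz) (hcz : 0 < cz)
    (z : Vh → Λh)
    (hA1 : ∀ v : Vh,
      (∀ u : Vh, |⟪j (z v) + d v, t u⟫| ≤ Cz * ‖G u‖ * ‖G v‖) ∧
      ‖j (z v)‖ ≤ cz * ‖G v‖) :
    ∃ ζ : ℝ, 0 < ζ ∧ ζ ≤ 1 ∧ ∃ C > 0, ∀ (u : Vh) (lam : Λh), ∃ φ : Vh,
      -- φ is the function provided by the Nitsche stability hypothesis for u at ζ
      (Real.sqrt (‖G φ‖ ^ 2 + ‖t φ‖ ^ 2) ≤ cb * ‖t u‖ ∧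
        cw * (‖G u‖ ^ 2 + ‖t u‖ ^ 2) ≤
          ⟪G u, G (u + ζ • φ)⟫ - ⟪d u, t (u + ζ • φ)⟫ + ⟪d (u + ζ • φ), t u⟫) ∧
      -- coercivity of the Barbosa–Hughes form with w = u + ζ•φ, μ = λ + z(ζ•φ)
      ((cw / 2) * (‖G u‖ ^ 2 + ‖t u‖ ^ 2) + (γ / 2) * ‖j lam + d u‖ ^ 2 ≤
        ⟪G u, G (u + ζ • φ)⟫ + ⟪j lam, t (u + ζ • φ)⟫
          - ⟪j (lam + z (ζ • φ)), t u⟫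
          + γ * ⟪j lam + d u, j (lam + z (ζ • φ)) + d (u + ζ • φ)⟫) ∧
      -- stability of the constructed test pair
      (Real.sqrt (‖G (u + ζ • φ)‖ ^ 2 + ‖t (u + ζ • φ)‖ ^ 2) + ‖j (lam + z (ζ • φ))‖ ≤
        C * (Real.sqrt (‖G u‖ ^ 2 + ‖t u‖ ^ 2) + ‖j lam‖)) :=
  barbosa_hughes_coercivity_key_step_general G t d j γ hγ ct hct htrace cw cb hcw hcb hNit Cz cz hCz
    hcz z hA1
end

section
/- Verification of the coercivity assumption for weak boundary conditions (Section 4.1.2): Let H be a real inner product space and P : H → H an orthogonal projection (P is linear, P ∘ P = P, and ⟨P x, y⟩ = ⟨x, P y⟩ for all x, y ∈ H). Let c > 0, let x ∈ H and let g ≥ 0 be a real number satisfying the approximation bound ‖x − P x‖_H ≤ c·g. Then for every δ > 0, g² + δ·⟨P x, x⟩_H ≥ (1 − c²·δ)·g² + (δ/2)·‖x‖²_H. In particular, for δ < c⁻² the right-hand side controls both g² and ‖x‖²_H with positive constants. -/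
open scoped RealInnerProductSpace

/-!
Write `x = P x + (x - P x)`. For an orthogonal projection the two pieces are orthogonal and
`⟪P x, x⟫ = ‖P x‖²`, so Pythagoras and the approximation bound give `‖x‖² ≤ ⟪P x, x⟫ + c² g²`.
Multiplying by `δ` and discarding half of `δ ‖x‖² ≥ 0` yields the claim.
-/

namespace LinearMap.IsSymmetricProjection

variable {𝕜 E : Type*} [RCLike 𝕜] [NormedAddCommGroup E] [InnerProductSpace 𝕜 E]
  {P : E →ₗ[𝕜] E}

theorem inner_apply_self (hP : P.IsSymmetricProjection) (x : E) :
    inner 𝕜 (P x) x = (‖P x‖ : 𝕜) ^ 2 := by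
  conv_lhs => rw [← hP.isIdempotentElem]
  rw [Module.End.mul_apply, hP.isSymmetric, inner_self_eq_norm_sq_to_K]

theorem inner_apply_sub_apply_eq_zero (hP : P.IsSymmetricProjection) (x : E) :
    inner 𝕜 (P x) (x - P x) = 0 := by
  rw [inner_sub_right, hP.inner_apply_self, inner_self_eq_norm_sq_to_K, sub_self]

theorem norm_sq_eq_norm_apply_sq_add_norm_sub_apply_sq (hP : P.IsSymmetricProjection) (x : E) :
    ‖x‖ ^ 2 = ‖P x‖ ^ 2 + ‖x - P x‖ ^ 2 := by
  simpa only [add_sub_cancel, ← sq] using norm_add_sq_eq_norm_sq_add_norm_sq_of_inner_eq_zero _ _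
    (hP.inner_apply_sub_apply_eq_zero x)

end LinearMap.IsSymmetricProjection

theorem coercivity_weak_boundary_conditions_general
    {H : Type*} [NormedAddCommGroup H] [InnerProductSpace ℝ H]
    (P : H →ₗ[ℝ] H)
    (hP_idem : P ∘ₗ P = P)
    (hP_sa : ∀ x y : H, ⟪P x, y⟫ = ⟪x, P y⟫)
    (c : ℝ) (x : H) (g : ℝ)
    (happrox : ‖x - P x‖ ≤ c * g) :
    ∀ δ > 0, (1 - c ^ 2 * δ) * g ^ 2 + (δ / 2) * ‖x‖ ^ 2 ≤ g ^ 2 + δ * ⟪P x, x⟫ := by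
  intro δ hδ
  have hP : P.IsSymmetricProjection := ⟨hP_idem, hP_sa⟩
  have happrox_sq : ‖x - P x‖ ^ 2 ≤ c ^ 2 * g ^ 2 := by
    rw [← mul_pow]
    exact pow_le_pow_left₀ (norm_nonneg _) happrox 2
  have hx : ‖x‖ ^ 2 ≤ ⟪P x, x⟫ + c ^ 2 * g ^ 2 := by
    rw [hP.inner_apply_self, RCLike.ofReal_real_eq_id, id,
      hP.norm_sq_eq_norm_apply_sq_add_norm_sub_apply_sq]
    gcongr
  have hδx := mul_le_mul_of_nonneg_left hx hδ.le
  have hδx_nonneg : 0 ≤ δ / 2 * ‖x‖ ^ 2 := by positivity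
  linarith

/-- **Verification of the coercivity assumption for weak boundary conditions
(Section 4.1.2).**
If `P` is an orthogonal projection on a real inner product space `H`, `c > 0`, `g ≥ 0` and
`‖x − P x‖ ≤ c g`, then for every `δ > 0`,
`g² + δ ⟪P x, x⟫ ≥ (1 − c² δ) g² + (δ/2) ‖x‖²`. -/
theorem coercivity_weak_boundary_conditions
    {H : Type*} [NormedAddCommGroup H] [InnerProductSpace ℝ H]
    (P : H →ₗ[ℝ] H)
    (hP_idem : P ∘ₗ P = P)
    (hP_sa : ∀ x y : H, ⟪P x, y⟫ = ⟪x, P y⟫)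
    (c : ℝ) (hc : 0 < c) (x : H) (g : ℝ) (hg : 0 ≤ g)
    (happrox : ‖x - P x‖ ≤ c * g) :
    ∀ δ > 0, (1 - c ^ 2 * δ) * g ^ 2 + (δ / 2) * ‖x‖ ^ 2 ≤ g ^ 2 + δ * ⟪P x, x⟫ :=
  coercivity_weak_boundary_conditions_general P hP_idem hP_sa c x g happrox
end
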